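/- arXiv:1305.0603 — 8 statements merged into one kernel-verified Lean document; each statement's English description precedes it below -/
import Mathlib

section
/- Let t ≥ 2, k ≥ 2 and m ≥ 2 be integers. Then forb(m, t·F_{0,k,k,0}, t−1) ≤ forb(m−1, t·F_{0,k,k,0}, t−1) + (t−1)·forb(m−1, {F_{0,k,k,0}, t·F_{0,k,k−1,0}}). -/
/-- `F` is a configuration in `A`: some row and column permutation of `F`
is a submatrix of `A`. -/
def IsConfig {k n m p : ℕ} (F : Matrix (Fin k) (Fin n) Bool)
    (A : Matrix (Fin m) (Fin p) Bool) : Prop :=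
  ∃ (r : Fin k → Fin m) (c : Fin n → Fin p),
    Function.Injective r ∧ Function.Injective c ∧ ∀ i j, A (r i) (c j) = F i j

/-- A (0,1)-matrix is simple if no two of its columns are equal. -/
def Simple {m p : ℕ} (A : Matrix (Fin m) (Fin p) Bool) : Prop :=
  Function.Injective fun j i => A i j

/-- A (0,1)-matrix is `t`-simple if every column occurs with multiplicity at most `t`. -/
def TSimple {m p : ℕ} (t : ℕ) (A : Matrix (Fin m) (Fin p) Bool) : Prop :=
  ∀ j : Fin p, (Finset.univ.filter fun j' : Fin p => ∀ i, A i j' = A i j).card ≤ t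

/-- `forb m F`: the maximum number of columns of an `m`-rowed simple matrix
avoiding `F` as a configuration. -/
noncomputable def forb (m : ℕ) {k n : ℕ} (F : Matrix (Fin k) (Fin n) Bool) : ℕ :=
  sSup { p : ℕ | ∃ A : Matrix (Fin m) (Fin p) Bool, Simple A ∧ ¬ IsConfig F A }

/-- `t·M`: the concatenation of `t` copies of `M`. -/
def tCopies {k n : ℕ} (t : ℕ) (M : Matrix (Fin k) (Fin n) Bool) :
    Matrix (Fin k) (Fin (t * n)) Bool :=
  fun i j => M i ⟨j.val % n, Nat.mod_lt _ (by
    rcases Nat.eq_zero_or_pos n with h | h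
    · exact absurd j.isLt (by simp [h])
    · exact h)⟩

/-- `F_{a,b,c,d}`: the `(a+b+c+d) × 2` matrix with `a` rows `[1 1]`, `b` rows `[1 0]`,
`c` rows `[0 1]` and `d` rows `[0 0]`. -/
def Fabcd (a b c d : ℕ) : Matrix (Fin (a+b+c+d)) (Fin 2) Bool :=
  fun i j =>
    if i.val < a then true
    else if i.val < a + b then decide (j = 0)
    else if i.val < a + b + c then decide (j = 1)
    else false

/-- `forb(m, F, t)` for a single forbidden configuration `F`:
maximum number of columns of an `m`-rowed `t`-simple matrix avoiding `F`. -/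
noncomputable def forbT (m t : ℕ) {k n : ℕ} (F : Matrix (Fin k) (Fin n) Bool) : ℕ :=
  sSup { p : ℕ | ∃ A : Matrix (Fin m) (Fin p) Bool, TSimple t A ∧ ¬ IsConfig F A }

/-- `forb(m, {F1, F2})` for a pair of forbidden configurations (simple matrices). -/
noncomputable def forbPair (m : ℕ) {k1 n1 k2 n2 : ℕ}
    (F1 : Matrix (Fin k1) (Fin n1) Bool) (F2 : Matrix (Fin k2) (Fin n2) Bool) : ℕ :=
  sSup { p : ℕ | ∃ A : Matrix (Fin m) (Fin p) Bool,
    TSimple 1 A ∧ ¬ IsConfig F1 A ∧ ¬ IsConfig F2 A }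

/-
Delete the first row of an `m`-rowed `(t-1)`-simple matrix `A` avoiding `t·F_{0,k,k,0}` and group
its columns by what remains. A remaining vector `v` occurring more than `t-1` times (a heavy tail)
must occur below both a `0` and a `1`. Discarding the columns with a `1` on top of a heavy tail
leaves an `(m-1)`-rowed `(t-1)`-simple matrix still avoiding `t·F_{0,k,k,0}`, and at most `t-1`
columns are discarded per heavy tail. The simple matrix of heavy tails avoids `F_{0,k,k,0}`, since
each of its columns occurs `t` times in `A`, and it avoids `t·F_{0,k,k-1,0}`, since the first row
of `A` extends such a configuration by a `[0 1]` row, the top entry of every column being free.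
-/

open Finset Function
open scoped Matrix

def IsConfigOn {k n m : ℕ} {ι : Type*} (F : Matrix (Fin k) (Fin n) Bool)
    (A : Matrix (Fin m) ι Bool) (S : Set ι) : Prop :=
  ∃ (r : Fin k → Fin m) (c : Fin n → ι),
    Injective r ∧ Injective c ∧ (∀ j, c j ∈ S) ∧ ∀ i j, A (r i) (c j) = F i j

def allColumns (m : ℕ) : Matrix (Fin m) (Fin m → Bool) Bool := fun i v => v i

lemma tCopies_apply {k n t : ℕ} (M : Matrix (Fin k) (Fin n) Bool) (i : Fin k) (j : Fin (t * n)) :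
    tCopies t M i j = M i (finProdFinEquiv.symm j).2 := by
  simp only [tCopies]
  congr 1

lemma Fabcd_eq_of_val_eq {a b c c' d : ℕ} (hc : c' ≤ c) (i : Fin (a + b + c' + 0))
    (i' : Fin (a + b + c + d)) (hi : (i : ℕ) = i') (j : Fin 2) :
    Fabcd a b c' 0 i j = Fabcd a b c d i' j := by
  have := i.isLt
  simp only [Fabcd, hi]
  split_ifs <;> first | rfl | omega

lemma tCopies_Fabcd_submatrix_castSucc {t k : ℕ} (hk : 0 < k) :
    ((tCopies t (Fabcd 0 k k 0)).submatrix
      (finCongr (by omega : 0 + k + (k - 1) + 0 + 1 = 0 + k + k + 0)) id).submatrix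
      Fin.castSucc id = tCopies t (Fabcd 0 k (k - 1) 0) := by
  ext i j
  simp only [Matrix.submatrix_apply, tCopies_apply, id]
  exact (Fabcd_eq_of_val_eq (by omega) _ _ (by simp) _).symm

section Config

variable {k n m p : ℕ} {F : Matrix (Fin k) (Fin n) Bool} {A : Matrix (Fin m) (Fin p) Bool}

lemma IsConfig.of_submatrix_equiv {k' : ℕ} (σ : Fin k' ≃ Fin k)
    (h : IsConfig (F.submatrix σ id) A) : IsConfig F A := by
  obtain ⟨r, c, hr, hc, h⟩ := h
  exact ⟨r ∘ σ.symm, c, hr.comp σ.symm.injective, hc,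
    fun i j => by simpa using h (σ.symm i) j⟩

lemma IsConfigOn.isConfig {S : Set (Fin p)} (h : IsConfigOn F A S) : IsConfig F A :=
  let ⟨r, c, hr, hc, _, h⟩ := h
  ⟨r, c, hr, hc, h⟩

lemma IsConfig.of_submatrix {m' : ℕ} {e : Fin m' → Fin m} (he : Injective e)
    (h : IsConfig F (A.submatrix e id)) : IsConfig F A :=
  let ⟨r, c, hr, hc, h⟩ := h
  ⟨e ∘ r, c, he.comp hr, hc, h⟩

lemma isConfig_tCopies_of_isConfigOn {t : ℕ} {D : Set (Fin m → Bool)}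
    (hD : ∀ v ∈ D, t ≤ #{j | (A · j) = v}) (h : IsConfigOn F (allColumns m) D) :
    IsConfig (tCopies t F) A := by
  obtain ⟨r, c, hr, hc, hcD, hF⟩ := h
  have hcopies : ∀ j, ∃ f : Fin t ↪ Fin p, ∀ a, (A · (f a)) = c j := by
    intro j
    obtain ⟨T, hT, hTcard⟩ := exists_subset_card_eq (hD _ (hcD j))
    exact ⟨(T.orderEmbOfFin hTcard).toEmbedding, fun a =>
      (mem_filter.1 (hT (T.orderEmbOfFin_mem hTcard a))).2⟩
  choose f hf using hcopies
  set e := (finProdFinEquiv (m := t) (n := n)).symm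
  refine ⟨r, fun j => f (e j).2 (e j).1, hr, fun j j' hjj' => ?_, fun i j => ?_⟩
  · have hcol : (e j).2 = (e j').2 := hc <| by
      rw [← hf _ (e j).1, ← hf _ (e j').1]
      exact congrArg (fun x => (A · x)) hjj'
    have hcopy : (e j).1 = (e j').1 := (f _).injective (by simpa only [hcol] using hjj')
    exact e.injective (Prod.ext hcopy hcol)
  · rw [tCopies_apply, ← hF]
    exact congrFun (hf _ _) (r i)

lemma isConfig_of_isConfigOn_castSucc {K N : ℕ} {F : Matrix (Fin (K + 1)) (Fin N) Bool}
    {A : Matrix (Fin (m + 1)) (Fin p) Bool} {D : Set (Fin m → Bool)}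
    (hD : ∀ v ∈ D, ∀ b, ∃ j, A 0 j = b ∧ (A ·.succ j) = v)
    (h : IsConfigOn (F.submatrix Fin.castSucc id) (allColumns m) D) : IsConfig F A := by
  obtain ⟨r, c, hr, hc, hcD, hF⟩ := h
  choose g hg0 hgtail using fun j => hD _ (hcD j) (F (Fin.last K) j)
  refine ⟨Fin.snoc (α := fun _ => Fin (m + 1)) (fun i => (r i).succ) 0, g, ?_, ?_, ?_⟩
  · exact Fin.snoc_injective_iff.2 ⟨(Fin.succ_injective _).comp hr,
      fun ⟨i, hi⟩ => Fin.succ_ne_zero _ hi⟩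
  · intro j j' hjj'
    exact hc (by rw [← hgtail j, ← hgtail j', hjj'])
  · intro i j
    induction i using Fin.lastCases with
    | last => simpa using hg0 j
    | cast i =>
      simp only [Fin.snoc_castSucc]
      exact (congrFun (hgtail j) (r i)).trans (hF i j)

end Config

section Forb

variable {m p t k n : ℕ} {F : Matrix (Fin k) (Fin n) Bool}

lemma TSimple.card_filter_le {A : Matrix (Fin m) (Fin p) Bool} (hA : TSimple t A)
    (v : Fin m → Bool) : #{j | (A · j) = v} ≤ t := by
  by_cases h : ∃ j₀, (A · j₀) = v
  · obtain ⟨j₀, rfl⟩ := h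
    simpa [funext_iff] using hA j₀
  · rw [filter_false_of_mem fun j _ hj => h ⟨j, hj⟩, card_empty]
    exact Nat.zero_le t

lemma TSimple.card_le {A : Matrix (Fin m) (Fin p) Bool} (hA : TSimple t A) : p ≤ t * 2 ^ m :=
  calc p = #(univ : Finset (Fin p)) := by simp
    _ ≤ t * #(univ.image fun j => (A · j)) :=
      card_le_mul_card_image _ _ fun v _ => hA.card_filter_le v
    _ ≤ t * 2 ^ m := by gcongr; simpa using card_le_univ (univ.image fun j => (A · j))

lemma le_forbT (A : Matrix (Fin m) (Fin p) Bool) (hA : TSimple t A) (hF : ¬IsConfig F A) :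
    p ≤ forbT m t F :=
  le_csSup ⟨t * 2 ^ m, fun _ ⟨_, hB, _⟩ => hB.card_le⟩ ⟨A, hA, hF⟩

lemma le_forbPair {k' n' : ℕ} {F' : Matrix (Fin k') (Fin n') Bool}
    (A : Matrix (Fin m) (Fin p) Bool) (hA : TSimple 1 A) (hF : ¬IsConfig F A)
    (hF' : ¬IsConfig F' A) : p ≤ forbPair m F F' :=
  le_csSup ⟨1 * 2 ^ m, fun _ ⟨_, hB, _⟩ => hB.card_le⟩ ⟨A, hA, hF, hF'⟩

lemma exists_tSimple_isConfigOn {ι : Type*} (A : Matrix (Fin m) ι Bool) (S : Finset ι)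
    (hS : ∀ v, #{j ∈ S | (A · j) = v} ≤ t) :
    ∃ M : Matrix (Fin m) (Fin #S) Bool, TSimple t M ∧
      ∀ {k n : ℕ} (F : Matrix (Fin k) (Fin n) Bool), IsConfig F M → IsConfigOn F A S := by
  set e := S.equivFin.symm
  have he : Injective fun j => (e j : ι) := Subtype.val_injective.comp e.injective
  refine ⟨fun i j => A i (e j), fun j => ?_, fun F ⟨r, c, hr, hc, h⟩ =>
    ⟨r, fun j => e (c j), hr, he.comp hc, fun j => (e (c j)).2, h⟩⟩
  refine (card_le_card_of_injOn (fun j => (e j : ι)) (fun j' hj' => ?_) he.injOn).trans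
    (hS fun i => A i (e j))
  simp only [coe_filter, mem_univ, true_and] at hj' ⊢
  exact ⟨(e j').2, funext hj'⟩

lemma card_le_forbT {ι : Type*} {A : Matrix (Fin m) ι Bool} {S : Finset ι}
    (hS : ∀ v, #{j ∈ S | (A · j) = v} ≤ t) (hF : ¬IsConfigOn F A S) :
    #S ≤ forbT m t F := by
  obtain ⟨M, hM, hMF⟩ := exists_tSimple_isConfigOn A S hS
  exact le_forbT M hM (hF ∘ hMF F)

lemma card_le_forbPair {k' n' : ℕ} {F' : Matrix (Fin k') (Fin n') Bool}
    {D : Finset (Fin m → Bool)} (hF : ¬IsConfigOn F (allColumns m) D)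
    (hF' : ¬IsConfigOn F' (allColumns m) D) : #D ≤ forbPair m F F' := by
  obtain ⟨M, hM, hMF⟩ := exists_tSimple_isConfigOn (t := 1) (allColumns m) D fun v =>
    card_le_one.2 fun a ha b hb => (mem_filter.1 ha).2.trans (mem_filter.1 hb).2.symm
  exact le_forbPair M hM (hF ∘ hMF F) (hF' ∘ hMF F')

end Forb

section DeleteFirstRow

variable {n p t : ℕ} {A : Matrix (Fin (n + 1)) (Fin p) Bool}

def heavyTails (t : ℕ) (A : Matrix (Fin (n + 1)) (Fin p) Bool) : Finset (Fin n → Bool) :=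
  {v | t - 1 < #{j | (A ·.succ j) = v}}

lemma card_filter_head_tail_le (hA : TSimple (t - 1) A) (b : Bool) (v : Fin n → Bool) :
    #{j | A 0 j = b ∧ (A ·.succ j) = v} ≤ t - 1 :=
  calc _ = #{j | (A · j) = Fin.cons b v} := by
        congr 1
        ext j
        rw [mem_filter, mem_filter, ← Fin.cons_self_tail (A · j), Fin.cons_inj]
        rfl
    _ ≤ t - 1 := hA.card_filter_le _

lemma exists_head_eq_of_mem_heavyTails (hA : TSimple (t - 1) A) {v : Fin n → Bool}
    (hv : v ∈ heavyTails t A) (b : Bool) : ∃ j, A 0 j = b ∧ (A ·.succ j) = v := by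
  by_contra! h
  have hsub : ({j | (A ·.succ j) = v} : Finset (Fin p)) ⊆
      ({j | A 0 j = !b ∧ (A ·.succ j) = v} : Finset (Fin p)) := by
    intro j hj
    simp only [mem_filter, mem_univ, true_and] at hj ⊢
    exact ⟨Bool.eq_not.2 fun hb => h j hb hj, hj⟩
  have := (card_le_card hsub).trans (card_filter_head_tail_le hA (!b) v)
  simp only [heavyTails, mem_filter, mem_univ, true_and] at hv
  omega

def keptColumns (t : ℕ) (A : Matrix (Fin (n + 1)) (Fin p) Bool) : Finset (Fin p) :=
  {j | A 0 j = false ∨ (A ·.succ j) ∉ heavyTails t A}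

lemma card_filter_keptColumns_le (hA : TSimple (t - 1) A) (v : Fin n → Bool) :
    #{j ∈ keptColumns t A | (A ·.succ j) = v} ≤ t - 1 := by
  by_cases hv : v ∈ heavyTails t A
  · refine (card_le_card fun j hj => ?_).trans (card_filter_head_tail_le hA false v)
    simp only [keptColumns, mem_filter, mem_univ, true_and] at hj ⊢
    obtain ⟨hj | hj, rfl⟩ := hj
    · exact ⟨hj, rfl⟩
    · exact absurd hv hj
  · simp only [heavyTails, mem_filter, mem_univ, true_and, not_lt] at hv
    exact (card_le_card (filter_subset_filter _ (subset_univ _))).trans hv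

lemma card_le_card_keptColumns_add (hA : TSimple (t - 1) A) :
    p ≤ #(keptColumns t A) + (t - 1) * #(heavyTails t A) :=
  calc p = #(keptColumns t A) + #{j | ¬(A 0 j = false ∨ (A ·.succ j) ∉ heavyTails t A)} := by
        rw [keptColumns, card_filter_add_card_filter_not, card_univ, Fintype.card_fin]
    _ ≤ #(keptColumns t A) + (t - 1) * #(heavyTails t A) := by
        gcongr
        refine card_le_mul_card_image_of_maps_to (f := fun j => (A ·.succ j))
          (fun j hj => ?_) _ fun v _ => ?_
        · simp only [mem_filter, mem_univ, true_and, not_or, not_not] at hj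
          exact hj.2
        · refine (card_le_card fun j hj => ?_).trans (card_filter_head_tail_le hA true v)
          simp only [mem_filter, mem_univ, true_and, not_or, not_not, Bool.not_eq_false] at hj ⊢
          exact ⟨hj.1.1, hj.2⟩

lemma card_keptColumns_le {k l : ℕ} {F : Matrix (Fin k) (Fin l) Bool} (hA : TSimple (t - 1) A)
    (hAF : ¬IsConfig (tCopies t F) A) : #(keptColumns t A) ≤ forbT n (t - 1) (tCopies t F) :=
  card_le_forbT (A := A.submatrix Fin.succ id) (card_filter_keptColumns_le hA)
    fun h => hAF (h.isConfig.of_submatrix (Fin.succ_injective _))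

lemma card_heavyTails_le {k : ℕ} (hk : 0 < k) (hA : TSimple (t - 1) A)
    (hAF : ¬IsConfig (tCopies t (Fabcd 0 k k 0)) A) :
    #(heavyTails t A) ≤ forbPair n (Fabcd 0 k k 0) (tCopies t (Fabcd 0 k (k - 1) 0)) := by
  refine card_le_forbPair (fun h => hAF ?_) (fun h => hAF ?_)
  · refine (isConfig_tCopies_of_isConfigOn (A := A.submatrix Fin.succ id)
      (fun v hv => ?_) h).of_submatrix (Fin.succ_injective _)
    rw [mem_coe, heavyTails, mem_filter] at hv
    exact Nat.le_of_pred_lt hv.2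
  · rw [← tCopies_Fabcd_submatrix_castSucc hk] at h
    exact (isConfig_of_isConfigOn_castSucc
      (fun v hv => exists_head_eq_of_mem_heavyTails hA hv) h).of_submatrix_equiv _

end DeleteFirstRow

theorem forbT_succ_le {n t k : ℕ} (hk : 0 < k) :
    forbT (n + 1) (t - 1) (tCopies t (Fabcd 0 k k 0)) ≤
      forbT n (t - 1) (tCopies t (Fabcd 0 k k 0)) +
      (t - 1) * forbPair n (Fabcd 0 k k 0) (tCopies t (Fabcd 0 k (k - 1) 0)) :=
  csSup_le' fun _ ⟨_, hA, hAF⟩ => (card_le_card_keptColumns_add hA).trans <|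
    add_le_add (card_keptColumns_le hA hAF) (Nat.mul_le_mul_left _ (card_heavyTails_le hk hA hAF))

theorem stmt_3_general (t k m : ℕ) (hk : 2 ≤ k) :
    forbT m (t - 1) (tCopies t (Fabcd 0 k k 0)) ≤
      forbT (m - 1) (t - 1) (tCopies t (Fabcd 0 k k 0)) +
      (t - 1) * forbPair (m - 1) (Fabcd 0 k k 0) (tCopies t (Fabcd 0 k (k - 1) 0)) := by
  cases m with
  | zero => exact Nat.le_add_right _ _
  | succ n => exact forbT_succ_le (by omega)

/-- **The induction (5).** For `t, k, m ≥ 2`: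
`forb(m, t·F_{0,k,k,0}, t−1) ≤ forb(m−1, t·F_{0,k,k,0}, t−1)
  + (t−1)·forb(m−1, {F_{0,k,k,0}, t·F_{0,k,k−1,0}})`. -/
theorem stmt_3 (t k m : ℕ) (ht : 2 ≤ t) (hk : 2 ≤ k) (hm : 2 ≤ m) :
    forbT m (t - 1) (tCopies t (Fabcd 0 k k 0)) ≤
      forbT (m - 1) (t - 1) (tCopies t (Fabcd 0 k k 0)) +
      (t - 1) * forbPair (m - 1) (Fabcd 0 k k 0) (tCopies t (Fabcd 0 k (k - 1) 0)) :=
  stmt_3_general t k m hk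
end

section
/- Let t ≥ 2 be an integer. Then forb(m, {F_{0,2,2,0}, t·F_{0,2,1,0}}) = O(m); that is, there exists a constant c > 0 (depending on t) such that for all m ≥ 1, forb(m, {F_{0,2,2,0}, t·F_{0,2,1,0}}) ≤ c·m. -/
open Finset

section Comb
variable {α : Type*} [DecidableEq α]
attribute [local instance] Classical.propDecidable

/-- Condition from avoiding `F_{0,2,2,0}`. -/
def NearCmp (G : Finset (Finset α)) : Prop :=
  ∀ A ∈ G, ∀ B ∈ G, (A \ B).card ≤ 1 ∨ (B \ A).card ≤ 1

/-- Condition from avoiding `t·F_{0,2,1,0}`. -/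
def NoDouble (t : ℕ) (G : Finset (Finset α)) : Prop :=
  ∀ a b c : α, a ≠ b → a ≠ c → b ≠ c →
    ∀ P Q : Finset (Finset α), P ⊆ G → Q ⊆ G →
      (∀ A ∈ P, a ∈ A ∧ b ∈ A ∧ c ∉ A) →
      (∀ A ∈ Q, a ∉ A ∧ b ∉ A ∧ c ∈ A) →
      ¬(t ≤ P.card ∧ t ≤ Q.card)

lemma sdiff_one {G : Finset (Finset α)} (h1 : NearCmp G) {A B : Finset α}
    (hA : A ∈ G) (hB : B ∈ G) (hcard : A.card = B.card) (hne : A ≠ B) :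
    (A \ B).card = 1 ∧ (B \ A).card = 1 := by
  have hcomm : (A \ B).card = (B \ A).card := Finset.card_sdiff_comm hcard
  have hpos : 0 < (A \ B).card := by
    rw [Finset.card_pos, Finset.sdiff_nonempty]
    intro hsub
    exact hne (Finset.eq_of_subset_of_card_le hsub hcard.ge)
  rcases h1 A hA B hB with h | h <;> omega

lemma star_or_costar {G : Finset (Finset α)} (h1 : NearCmp G) {s : ℕ}
    {C : Finset (Finset α)} (hCG : C ⊆ G) (hcard : ∀ A ∈ C, A.card = s)
    {A₀ A₁ : Finset α} (h0 : A₀ ∈ C) (h1' : A₁ ∈ C) (hne : A₀ ≠ A₁) :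
    (∃ S : Finset α, ∀ B ∈ C, ∃ y, y ∉ S ∧ B = insert y S) ∨
    (∃ U : Finset α, ∀ B ∈ C, ∃ y, y ∈ U ∧ B = U.erase y) := by
  classical
  have hdist : ∀ X ∈ C, ∀ Y ∈ C, X ≠ Y → (X \ Y).card = 1 ∧ (Y \ X).card = 1 := by
    intro X hX Y hY hXY
    exact sdiff_one h1 (hCG hX) (hCG hY) (by rw [hcard X hX, hcard Y hY]) hXY
  set S : Finset α := A₀ ∩ A₁ with hS
  set U : Finset α := A₀ ∪ A₁ with hU
  have hs1 : 1 ≤ s := by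
    by_contra h
    have h0' := hcard A₀ h0
    have h1'' := hcard A₁ h1'
    have : A₀ = ∅ := Finset.card_eq_zero.mp (by omega)
    have : A₁ = ∅ := Finset.card_eq_zero.mp (by omega)
    exact hne (by simp_all)
  have hScard : S.card = s - 1 := by
    have h01 := hdist A₀ h0 A₁ h1' hne
    have hh := Finset.card_inter_add_card_sdiff A₀ A₁
    rw [← hS] at hh
    have := hcard A₀ h0
    omega
  have hUcard : U.card = s + 1 := by
    have h01 := hdist A₀ h0 A₁ h1' hne
    have hh := Finset.card_union_add_card_inter A₀ A₁
    rw [← hS, ← hU] at hh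
    have := hcard A₀ h0
    have := hcard A₁ h1'
    omega
  -- Step 1
  have step1 : ∀ B ∈ C, B ⊆ U ∨ (∃ q, q ∉ U ∧ B = insert q S) := by
    intro B hB
    by_cases hsub : B ⊆ U
    · exact Or.inl hsub
    · right
      obtain ⟨q, hqB, hqU⟩ := Finset.not_subset.mp hsub
      have hBne0 : B ≠ A₀ := by
        rintro rfl; exact hqU (Finset.mem_union_left _ hqB)
      have hBne1 : B ≠ A₁ := by
        rintro rfl; exact hqU (Finset.mem_union_right _ hqB)
      have hq0 : B \ A₀ = {q} := by
        have hc := (hdist B hB A₀ h0 hBne0).1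
        have hqm : q ∈ B \ A₀ := by
          simp only [Finset.mem_sdiff]
          exact ⟨hqB, fun h => hqU (Finset.mem_union_left _ h)⟩
        exact (Finset.eq_singleton_iff_unique_mem.mpr
          ⟨hqm, fun x hx => by
            rcases Finset.card_eq_one.mp hc with ⟨z, hz⟩
            rw [hz] at hx hqm
            simp_all⟩)
      have hq1 : B \ A₁ = {q} := by
        have hc := (hdist B hB A₁ h1' hBne1).1
        have hqm : q ∈ B \ A₁ := by
          simp only [Finset.mem_sdiff]
          exact ⟨hqB, fun h => hqU (Finset.mem_union_right _ h)⟩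
        exact (Finset.eq_singleton_iff_unique_mem.mpr
          ⟨hqm, fun x hx => by
            rcases Finset.card_eq_one.mp hc with ⟨z, hz⟩
            rw [hz] at hx hqm
            simp_all⟩)
      have herase : B.erase q = S := by
        apply Finset.eq_of_subset_of_card_le
        · intro x hx
          obtain ⟨hxq, hxB⟩ := Finset.mem_erase.mp hx
          have hx0 : x ∈ A₀ := by
            by_contra h
            have : x ∈ B \ A₀ := Finset.mem_sdiff.mpr ⟨hxB, h⟩
            rw [hq0] at this; simp_all
          have hx1 : x ∈ A₁ := by
            by_contra h
            have : x ∈ B \ A₁ := Finset.mem_sdiff.mpr ⟨hxB, h⟩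
            rw [hq1] at this; simp_all
          exact Finset.mem_inter.mpr ⟨hx0, hx1⟩
        · rw [hScard, Finset.card_erase_of_mem hqB, hcard B hB]
      refine ⟨q, hqU, ?_⟩
      rw [← herase, Finset.insert_erase hqB]
  by_cases hstar : ∀ B ∈ C, S ⊆ B
  · left
    refine ⟨S, fun B hB => ?_⟩
    have hsub := hstar B hB
    have hone : (B \ S).card = 1 := by
      have := Finset.card_sdiff_of_subset hsub
      rw [hScard, hcard B hB] at this
      omega
    obtain ⟨y, hy⟩ := Finset.card_eq_one.mp hone
    have hyB : y ∈ B \ S := by rw [hy]; exact Finset.mem_singleton_self y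
    refine ⟨y, (Finset.mem_sdiff.mp hyB).2, ?_⟩
    apply Finset.eq_of_subset_of_card_le
    · intro z hz
      by_cases hzS : z ∈ S
      · exact Finset.mem_insert_of_mem hzS
      · have : z ∈ B \ S := Finset.mem_sdiff.mpr ⟨hz, hzS⟩
        rw [hy] at this
        simp only [Finset.mem_singleton] at this
        rw [this]; exact Finset.mem_insert_self y S
    · rw [Finset.card_insert_of_notMem (Finset.mem_sdiff.mp hyB).2, hScard, hcard B hB]
      omega
  · right
    push_neg at hstar
    obtain ⟨C₂, hC₂, hnsub⟩ := hstar
    obtain ⟨w, hwS, hwC₂⟩ := Finset.not_subset.mp hnsub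
    have hC₂U : C₂ ⊆ U := by
      rcases step1 C₂ hC₂ with h | ⟨q, hqU, hq⟩
      · exact h
      · exfalso; apply hwC₂; rw [hq]; exact Finset.mem_insert_of_mem hwS
    have huniv : ∀ B ∈ C, B ⊆ U := by
      intro B hB
      rcases step1 B hB with h | ⟨q, hqU, hq⟩
      · exact h
      · exfalso
        -- B = insert q S with q ∉ U; contradict NearCmp with C₂
        have hqS : q ∉ S := fun h => hqU (Finset.mem_union_left _ (Finset.mem_inter.mp h).1)
        have hqw : q ≠ w := fun h => hqS (h ▸ hwS)
        have hBC₂ : 2 ≤ (B \ C₂).card := by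
          have hq' : q ∈ B \ C₂ := Finset.mem_sdiff.mpr
            ⟨by rw [hq]; exact Finset.mem_insert_self q S, fun h => hqU (hC₂U h)⟩
          have hw' : w ∈ B \ C₂ := Finset.mem_sdiff.mpr
            ⟨by rw [hq]; exact Finset.mem_insert_of_mem hwS, hwC₂⟩
          have hsub : ({q, w} : Finset α) ⊆ B \ C₂ := by
            intro z hz
            rcases Finset.mem_insert.mp hz with h | h
            · exact h ▸ hq'
            · exact (Finset.mem_singleton.mp h) ▸ hw'
          calc 2 = ({q, w} : Finset α).card := by rw [Finset.card_insert_of_notMem (by simp [hqw]), Finset.card_singleton]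
          _ ≤ _ := Finset.card_le_card hsub
        have hC₂B : 2 ≤ (C₂ \ B).card := by
          have hint : C₂ ∩ B ⊆ S.erase w := by
            intro z hz
            obtain ⟨hz2, hzB⟩ := Finset.mem_inter.mp hz
            rw [hq] at hzB
            rcases Finset.mem_insert.mp hzB with rfl | hzS
            · exact absurd (hC₂U hz2) hqU
            · exact Finset.mem_erase.mpr ⟨fun h => hwC₂ (h ▸ hz2), hzS⟩
          have hs2 : 2 ≤ s := by
            have : 0 < S.card := Finset.card_pos.mpr ⟨w, hwS⟩
            omega
          have h1' : (C₂ ∩ B).card ≤ s - 2 := by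
            have := Finset.card_le_card hint
            rw [Finset.card_erase_of_mem hwS, hScard] at this
            omega
          have h2' := Finset.card_inter_add_card_sdiff C₂ B
          have := hcard C₂ hC₂
          omega
        rcases h1 B (hCG hB) C₂ (hCG hC₂) with h | h <;> omega
    refine ⟨U, fun B hB => ?_⟩
    have hone : (U \ B).card = 1 := by
      have := Finset.card_sdiff_of_subset (huniv B hB)
      rw [hUcard, hcard B hB] at this
      omega
    obtain ⟨y, hy⟩ := Finset.card_eq_one.mp hone
    have hyU : y ∈ U \ B := by rw [hy]; exact Finset.mem_singleton_self y
    refine ⟨y, (Finset.mem_sdiff.mp hyU).1, ?_⟩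
    apply Finset.eq_of_subset_of_card_le
    · intro z hz
      exact Finset.mem_erase.mpr ⟨fun h => (Finset.mem_sdiff.mp hyU).2 (h ▸ hz), huniv B hB hz⟩
    · rw [Finset.card_erase_of_mem (Finset.mem_sdiff.mp hyU).1, hUcard, hcard B hB]
      omega
  


/-- `x` is a petal of a "big star" of size-class `s` in `G`. -/
def BSP (G : Finset (Finset α)) (t : ℕ) (x : α) (s : ℕ) : Prop :=
  ∃ S : Finset α, S.card + 1 = s ∧ x ∉ S ∧ insert x S ∈ G ∧
    ∃ P : Finset α, P.card = t ∧ ∀ y ∈ P, y ≠ x ∧ y ∉ S ∧ insert y S ∈ G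





lemma insert_sdiff_insert' {x : α} {S T : Finset α} (hxS : x ∉ S) :
    insert x S \ insert x T = S \ T := by
  ext z
  simp only [Finset.mem_sdiff, Finset.mem_insert, not_or]
  constructor
  · rintro ⟨h1 | h1, h2, h3⟩
    · exact absurd h1 h2
    · exact ⟨h1, h3⟩
  · rintro ⟨h1, h2⟩
    exact ⟨Or.inr h1, fun h => hxS (h ▸ h1), h2⟩

lemma petal_count {G : Finset (Finset α)} {t : ℕ} (h1 : NearCmp G) (h2 : NoDouble t G)
    (ht : 2 ≤ t) (x : α) (D : Finset ℕ) (hD : ∀ s ∈ D, BSP G t x s) :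
    D.card ≤ 3 * t + 1 := by
  classical
  by_contra hbig
  push_neg at hbig
  have hDcard : 3 * t + 2 ≤ D.card := hbig
  have hDne : D.Nonempty := Finset.card_pos.mp (by omega)
  set sstar : ℕ := D.max' hDne with hsstar
  have hsmem : sstar ∈ D := D.max'_mem hDne
  set D' : Finset ℕ := D.filter (fun s => s + t + 3 ≤ sstar) with hD'
  have hD'card : 2 * t - 1 ≤ D'.card := by
    have hsplit : D = D' ∪ D.filter (fun s => ¬(s + t + 3 ≤ sstar)) := by
      rw [hD', Finset.filter_union_filter_not_eq]
    have hsub2 : D.filter (fun s => ¬(s + t + 3 ≤ sstar)) ⊆ Finset.Icc (sstar - t - 2) sstar := by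
      intro z hz
      obtain ⟨hzD, hz2⟩ := Finset.mem_filter.mp hz
      have := D.le_max' z hzD
      rw [Finset.mem_Icc]
      omega
    have h2' : (D.filter (fun s => ¬(s + t + 3 ≤ sstar))).card ≤ t + 3 := by
      have := Finset.card_le_card hsub2
      rw [Nat.card_Icc] at this
      omega
    have := Finset.card_union_le D' (D.filter (fun s => ¬(s + t + 3 ≤ sstar)))
    rw [← hsplit] at this
    omega
  obtain ⟨E, hED', hEcard⟩ := Finset.exists_subset_card_eq hD'card
  have f := E.orderIsoOfFin hEcard
  -- σ r = f (2r)
  have h2r : ∀ r : Fin t, 2 * r.val < 2 * t - 1 := fun r => by omega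
  set σ : Fin t → ℕ := fun r => (f ⟨2 * r.val, h2r r⟩ : ℕ) with hσ
  have hσD' : ∀ r, σ r ∈ D' := fun r => hED' (f ⟨2 * r.val, h2r r⟩).2
  have hσD : ∀ r, σ r ∈ D := fun r => Finset.mem_filter.mp (hσD' r) |>.1
  have hσtop : ∀ r, σ r + t + 3 ≤ sstar := fun r => (Finset.mem_filter.mp (hσD' r)).2
  have hgap : ∀ r r' : Fin t, r.val < r'.val → σ r + 2 ≤ σ r' := by
    intro r r' hlt
    have hmid : (2 * r.val + 1) < 2 * t - 1 := by omega
    have m1 : (f ⟨2 * r.val, h2r r⟩ : ℕ) < (f ⟨2 * r.val + 1, hmid⟩ : ℕ) := by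
      have := f.strictMono (show (⟨2 * r.val, h2r r⟩ : Fin (2*t-1)) < ⟨2 * r.val + 1, hmid⟩ by
        simp [Fin.lt_def])
      exact this
    have m2 : (f ⟨2 * r.val + 1, hmid⟩ : ℕ) < (f ⟨2 * r'.val, h2r r'⟩ : ℕ) := by
      have := f.strictMono (show (⟨2 * r.val + 1, hmid⟩ : Fin (2*t-1)) < ⟨2 * r'.val, h2r r'⟩ by
        simp [Fin.lt_def]; omega)
      exact this
    simp only [hσ]
    omega
  have hσinj : Function.Injective σ := by
    intro r r' h
    rcases lt_trichotomy r.val r'.val with hlt | heq | hlt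
    · have := hgap r r' hlt; omega
    · exact Fin.ext heq
    · have := hgap r' r hlt; omega
  -- choose cores for the low classes
  have hex : ∀ r : Fin t, ∃ S : Finset α, S.card + 1 = σ r ∧ x ∉ S ∧ insert x S ∈ G := by
    intro r
    obtain ⟨S, hc, hx, hm, _⟩ := hD _ (hσD r)
    exact ⟨S, hc, hx, hm⟩
  choose S hScard hSx hSG using hex
  -- top class
  obtain ⟨Sstar, hSstarcard, hSstarx, hSstarG, P, hPcard, hP⟩ := hD _ hsmem
  have ht1 : 0 < t := by omega
  set rtop : Fin t := ⟨t - 1, by omega⟩ with hrtop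
  have hkey : ∀ r : Fin t, (S r \ S rtop).card ≤ 1 := by
    intro r
    by_cases hr : r = rtop
    · rw [hr]; simp
    · have hlt : r.val < rtop.val := by
        have := r.isLt
        have hne' : r.val ≠ rtop.val := fun h => hr (Fin.ext h)
        simp only [hrtop] at hne' ⊢
        omega
      have hgap2 := hgap r rtop hlt
      have hcard2 : 2 ≤ (insert x (S rtop) \ insert x (S r)).card := by
        rw [insert_sdiff_insert' (hSx rtop)]
        have := Finset.le_card_sdiff (S r) (S rtop)
        have := hScard r
        have := hScard rtop
        omega
      rcases h1 _ (hSG r) _ (hSG rtop) with h | h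
      · rwa [insert_sdiff_insert' (hSx r)] at h
      · omega
  -- the union W
  set W : Finset α := S rtop ∪ Finset.univ.biUnion (fun r : Fin t => S r \ S rtop) with hW
  have hWsub : ∀ r : Fin t, S r ⊆ W := by
    intro r z hz
    by_cases h : z ∈ S rtop
    · exact Finset.mem_union_left _ h
    · exact Finset.mem_union_right _ (Finset.mem_biUnion.mpr ⟨r, Finset.mem_univ r,
        Finset.mem_sdiff.mpr ⟨hz, h⟩⟩)
  have hWcard : W.card ≤ (σ rtop - 1) + t := by
    have h1' := Finset.card_union_le (S rtop) (Finset.univ.biUnion (fun r : Fin t => S r \ S rtop))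
    rw [← hW] at h1'
    have h2' := Finset.card_biUnion_le (s := (Finset.univ : Finset (Fin t)))
      (t := fun r => S r \ S rtop)
    have h3' : ∑ r : Fin t, (S r \ S rtop).card ≤ t := by
      calc ∑ r : Fin t, (S r \ S rtop).card ≤ ∑ _r : Fin t, 1 :=
        Finset.sum_le_sum (fun r _ => hkey r)
      _ = t := by simp
    have := hScard rtop
    omega
  -- find a,b
  have hab : 2 ≤ (Sstar \ W).card := by
    have := Finset.le_card_sdiff W Sstar
    have := hσtop rtop
    omega
  obtain ⟨a, ha, b, hb, hab'⟩ := Finset.one_lt_card.mp (by omega : 1 < (Sstar \ W).card)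
  obtain ⟨haS, haW⟩ := Finset.mem_sdiff.mp ha
  obtain ⟨hbS, hbW⟩ := Finset.mem_sdiff.mp hb
  have hax : a ≠ x := fun h => hSstarx (h ▸ haS)
  have hbx : b ≠ x := fun h => hSstarx (h ▸ hbS)
  -- build P' and Q'
  set P' : Finset (Finset α) := P.image (fun y => insert y Sstar) with hP'
  set Q' : Finset (Finset α) := Finset.univ.image (fun r : Fin t => insert x (S r)) with hQ'
  have hP'card : P'.card = t := by
    rw [hP', Finset.card_image_of_injOn, hPcard]
    intro y hy y' hy' h
    have h2'' : insert y Sstar = insert y' Sstar := h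
    have hyS := (hP y hy).2.1
    have : y ∈ insert y' Sstar := h2'' ▸ Finset.mem_insert_self y Sstar
    rcases Finset.mem_insert.mp this with h' | h'
    · exact h'
    · exact absurd h' hyS
  have hQ'card : Q'.card = t := by
    rw [hQ', Finset.card_image_of_injOn, Finset.card_univ, Fintype.card_fin]
    intro r _ r' _ h
    have h2'' : insert x (S r) = insert x (S r') := h
    apply hσinj
    have hc1 : (insert x (S r)).card = σ r := by
      rw [Finset.card_insert_of_notMem (hSx r)]; exact hScard r
    have hc2 : (insert x (S r')).card = σ r' := by
      rw [Finset.card_insert_of_notMem (hSx r')]; exact hScard r'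
    rw [← hc1, ← hc2, h2'']
  apply h2 a b x hab' hax hbx P' Q'
  · intro A hA
    obtain ⟨y, hy, rfl⟩ := Finset.mem_image.mp hA
    exact (hP y hy).2.2
  · intro A hA
    obtain ⟨r, _, rfl⟩ := Finset.mem_image.mp hA
    exact hSG r
  · intro A hA
    obtain ⟨y, hy, rfl⟩ := Finset.mem_image.mp hA
    refine ⟨Finset.mem_insert_of_mem haS, Finset.mem_insert_of_mem hbS, ?_⟩
    intro hxmem
    rcases Finset.mem_insert.mp hxmem with h | h
    · exact (hP y hy).1 h.symm
    · exact hSstarx h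
  · intro A hA
    obtain ⟨r, _, rfl⟩ := Finset.mem_image.mp hA
    refine ⟨?_, ?_, Finset.mem_insert_self x (S r)⟩
    · intro hmem
      rcases Finset.mem_insert.mp hmem with h | h
      · exact hax h
      · exact haW (hWsub r h)
    · intro hmem
      rcases Finset.mem_insert.mp hmem with h | h
      · exact hbx h
      · exact hbW (hWsub r h)
  · exact ⟨hP'card.ge, hQ'card.ge⟩



def Sclass (G : Finset (Finset α)) (s : ℕ) : Finset (Finset α) :=
  G.filter (fun A => A.card = s)

def IsStarClass (G : Finset (Finset α)) (s : ℕ) : Prop :=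
  ∃ S : Finset α, ∀ B ∈ Sclass G s, ∃ y, y ∉ S ∧ B = insert y S

def IsCostarClass (G : Finset (Finset α)) (s : ℕ) : Prop :=
  ∃ U : Finset α, ∀ B ∈ Sclass G s, ∃ y, y ∈ U ∧ B = U.erase y

/-- A big star class is covered by petals satisfying BSP. -/
lemma star_class_le [Fintype α] {G : Finset (Finset α)} {t s : ℕ}
    (hbig : t + 2 ≤ (Sclass G s).card) (hstar : IsStarClass G s) :
    (Sclass G s).card ≤ (Finset.univ.filter (fun x : α => BSP G t x s)).card := by
  classical
  obtain ⟨S, hS⟩ := hstar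
  set Pet : Finset α := Finset.univ.filter (fun y => y ∉ S ∧ insert y S ∈ Sclass G s) with hPet
  have himg : Sclass G s = Pet.image (fun y => insert y S) := by
    apply Finset.Subset.antisymm
    · intro B hB
      obtain ⟨y, hyS, rfl⟩ := hS B hB
      exact Finset.mem_image.mpr ⟨y, Finset.mem_filter.mpr ⟨Finset.mem_univ _, hyS, hB⟩, rfl⟩
    · intro B hB
      obtain ⟨y, hy, rfl⟩ := Finset.mem_image.mp hB
      exact (Finset.mem_filter.mp hy).2.2
  have hinj : Set.InjOn (fun y => insert y S) Pet := by
    intro y hy y' hy' h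
    have h' : insert y S = insert y' S := h
    have hyS := (Finset.mem_filter.mp hy).2.1
    have : y ∈ insert y' S := h' ▸ Finset.mem_insert_self y S
    rcases Finset.mem_insert.mp this with h'' | h''
    · exact h''
    · exact absurd h'' hyS
  have hcards : (Sclass G s).card = Pet.card := by
    rw [himg, Finset.card_image_of_injOn hinj]
  rw [hcards]
  apply Finset.card_le_card
  intro x hx
  obtain ⟨-, hxS, hxmem⟩ := Finset.mem_filter.mp hx
  refine Finset.mem_filter.mpr ⟨Finset.mem_univ _, S, ?_, hxS, (Finset.mem_filter.mp hxmem).1, ?_⟩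
  · have := (Finset.mem_filter.mp hxmem).2
    rw [Finset.card_insert_of_notMem hxS] at this
    omega
  · -- t other petals
    have hPetcard : t + 2 ≤ Pet.card := by rw [← hcards]; exact hbig
    have : t ≤ (Pet.erase x).card := by
      rw [Finset.card_erase_of_mem hx]
      omega
    obtain ⟨P, hPsub, hPcard⟩ := Finset.exists_subset_card_eq this
    refine ⟨P, hPcard, fun y hy => ?_⟩
    have hy' := hPsub hy
    obtain ⟨hyx, hymem⟩ := Finset.mem_erase.mp hy'
    obtain ⟨-, hyS, hymem'⟩ := Finset.mem_filter.mp hymem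
    exact ⟨hyx, hyS, (Finset.mem_filter.mp hymem').1⟩

lemma star_sum_le [Fintype α] {G : Finset (Finset α)} {t : ℕ}
    (h1 : NearCmp G) (h2 : NoDouble t G) (ht : 2 ≤ t) (n : ℕ) :
    ∑ s ∈ Finset.range n,
      (if (t + 2 ≤ (Sclass G s).card ∧ IsStarClass G s) then (Sclass G s).card else 0)
      ≤ (3 * t + 1) * Fintype.card α := by
  have hterm : ∀ s ∈ Finset.range n,
      (if (t + 2 ≤ (Sclass G s).card ∧ IsStarClass G s) then (Sclass G s).card else 0)
        ≤ (Finset.univ.filter (fun x : α => BSP G t x s)).card := by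
    intro s _
    by_cases h : t + 2 ≤ (Sclass G s).card ∧ IsStarClass G s
    · rw [if_pos h]; exact star_class_le h.1 h.2
    · rw [if_neg h]; exact Nat.zero_le _
  calc ∑ s ∈ Finset.range n,
      (if (t + 2 ≤ (Sclass G s).card ∧ IsStarClass G s) then (Sclass G s).card else 0)
      ≤ ∑ s ∈ Finset.range n, (Finset.univ.filter (fun x : α => BSP G t x s)).card :=
        Finset.sum_le_sum hterm
    _ = ∑ s ∈ Finset.range n, ∑ x : α, (if BSP G t x s then 1 else 0) := by
        refine Finset.sum_congr rfl fun s _ => ?_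
        exact Finset.card_filter _ _
    _ = ∑ x : α, ∑ s ∈ Finset.range n, (if BSP G t x s then 1 else 0) := Finset.sum_comm
    _ = ∑ x : α, ((Finset.range n).filter (fun s => BSP G t x s)).card := by
        refine Finset.sum_congr rfl fun x _ => ?_
        exact (Finset.card_filter _ _).symm
    _ ≤ ∑ _x : α, (3 * t + 1) := Finset.sum_le_sum (fun x _ =>
        petal_count h1 h2 ht x _ (fun s hs => (Finset.mem_filter.mp hs).2))
    _ = (3 * t + 1) * Fintype.card α := by
        rw [Finset.sum_const, Finset.card_univ, smul_eq_mul, Nat.mul_comm]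

lemma nearCmp_compl [Fintype α] {G : Finset (Finset α)} (h1 : NearCmp G) :
    NearCmp (G.image (fun A => Aᶜ)) := by
  intro A hA B hB
  obtain ⟨A₀, hA₀, rfl⟩ := Finset.mem_image.mp hA
  obtain ⟨B₀, hB₀, rfl⟩ := Finset.mem_image.mp hB
  rw [compl_sdiff_compl, compl_sdiff_compl]
  exact (h1 B₀ hB₀ A₀ hA₀)

lemma noDouble_compl [Fintype α] {G : Finset (Finset α)} {t : ℕ} (h2 : NoDouble t G) :
    NoDouble t (G.image (fun A => Aᶜ)) := by
  intro a b c hab hac hbc P Q hPG hQG hP hQ hcards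
  have hPG' : P.image (fun A => Aᶜ) ⊆ G := by
    intro X hX
    obtain ⟨A, hA, rfl⟩ := Finset.mem_image.mp hX
    obtain ⟨B, hB, rfl⟩ := Finset.mem_image.mp (hPG hA)
    rwa [compl_compl]
  have hQG' : Q.image (fun A => Aᶜ) ⊆ G := by
    intro X hX
    obtain ⟨A, hA, rfl⟩ := Finset.mem_image.mp hX
    obtain ⟨B, hB, rfl⟩ := Finset.mem_image.mp (hQG hA)
    rwa [compl_compl]
  refine h2 a b c hab hac hbc (Q.image (fun A => Aᶜ)) (P.image (fun A => Aᶜ)) hQG' hPG' ?_ ?_ ?_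
  · intro X hX
    obtain ⟨A, hA, rfl⟩ := Finset.mem_image.mp hX
    obtain ⟨h1', h2', h3'⟩ := hQ A hA
    exact ⟨Finset.mem_compl.mpr h1', Finset.mem_compl.mpr h2', fun h => (Finset.mem_compl.mp h) h3'⟩
  · intro X hX
    obtain ⟨A, hA, rfl⟩ := Finset.mem_image.mp hX
    obtain ⟨h1', h2', h3'⟩ := hP A hA
    exact ⟨fun h => (Finset.mem_compl.mp h) h1', fun h => (Finset.mem_compl.mp h) h2',
      Finset.mem_compl.mpr h3'⟩
  · rw [Finset.card_image_of_injective _ compl_injective,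
      Finset.card_image_of_injective _ compl_injective]
    exact ⟨hcards.2, hcards.1⟩

lemma sclass_compl [Fintype α] {G : Finset (Finset α)} {s : ℕ} (hs : s ≤ Fintype.card α) :
    Sclass (G.image (fun A => Aᶜ)) (Fintype.card α - s) = (Sclass G s).image (fun A => Aᶜ) := by
  ext B
  simp only [Sclass, Finset.mem_filter, Finset.mem_image]
  constructor
  · rintro ⟨⟨A, hA, rfl⟩, hcard⟩
    refine ⟨A, ⟨hA, ?_⟩, rfl⟩
    rw [Finset.card_compl] at hcard
    have := Finset.card_le_univ A
    omega
  · rintro ⟨A, ⟨hA, hcard⟩, rfl⟩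
    exact ⟨⟨A, hA, rfl⟩, by rw [Finset.card_compl, hcard]⟩

lemma costar_to_star [Fintype α] {G : Finset (Finset α)} {s : ℕ} (hs : s ≤ Fintype.card α)
    (hco : IsCostarClass G s) : IsStarClass (G.image (fun A => Aᶜ)) (Fintype.card α - s) := by
  obtain ⟨U, hU⟩ := hco
  refine ⟨Uᶜ, fun B hB => ?_⟩
  rw [sclass_compl hs] at hB
  obtain ⟨A, hA, rfl⟩ := Finset.mem_image.mp hB
  obtain ⟨y, hyU, rfl⟩ := hU A hA
  refine ⟨y, fun h => (Finset.mem_compl.mp h) hyU, ?_⟩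
  ext z
  simp only [Finset.mem_compl, Finset.mem_erase, Finset.mem_insert]
  tauto

lemma master [Fintype α] {G : Finset (Finset α)} {t : ℕ}
    (h1 : NearCmp G) (h2 : NoDouble t G) (ht : 2 ≤ t) :
    G.card ≤ (t + 1) * (Fintype.card α + 1) + 2 * ((3 * t + 1) * Fintype.card α) := by
  classical
  set N := Fintype.card α with hN
  set Gc := G.image (fun A => Aᶜ) with hGc
  have h1c : NearCmp Gc := nearCmp_compl h1
  have h2c : NoDouble t Gc := noDouble_compl h2
  have hGeq : G = (Finset.range (N + 1)).biUnion (fun s => Sclass G s) := by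
    ext A
    simp only [Finset.mem_biUnion, Finset.mem_range, Sclass, Finset.mem_filter]
    constructor
    · intro hA
      have hle := Finset.card_le_univ A
      exact ⟨A.card, by omega, hA, rfl⟩
    · rintro ⟨s, -, hA, -⟩; exact hA
  have hdecomp : G.card = ∑ s ∈ Finset.range (N + 1), (Sclass G s).card := by
    conv_lhs => rw [hGeq]
    apply Finset.card_biUnion
    intro s _ s' _ hss
    apply Finset.disjoint_left.mpr
    intro A hA hA'
    exact hss ((Finset.mem_filter.mp hA).2 ▸ (Finset.mem_filter.mp hA').2 ▸ rfl)
  have hterm : ∀ s ∈ Finset.range (N + 1), (Sclass G s).card ≤ (t + 1)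
      + (if (t + 2 ≤ (Sclass G s).card ∧ IsStarClass G s) then (Sclass G s).card else 0)
      + (if (t + 2 ≤ (Sclass Gc (N - s)).card ∧ IsStarClass Gc (N - s))
            then (Sclass Gc (N - s)).card else 0) := by
    intro s _
    by_cases hb : t + 2 ≤ (Sclass G s).card
    · obtain ⟨A₀, h0, A₁, h1', hne⟩ := Finset.one_lt_card.mp
        (show 1 < (Sclass G s).card by omega)
      have hs_le : s ≤ N := by
        have h0' := (Finset.mem_filter.mp h0).2
        have hle := Finset.card_le_univ A₀
        omega
      rcases star_or_costar h1 (Finset.filter_subset _ _)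
          (fun A hA => (Finset.mem_filter.mp hA).2) h0 h1' hne with hstar | hco
      · rw [if_pos ⟨hb, hstar⟩]
        have := Nat.zero_le (if (t + 2 ≤ (Sclass Gc (N - s)).card ∧ IsStarClass Gc (N - s))
            then (Sclass Gc (N - s)).card else 0)
        omega
      · have hstar' : IsStarClass Gc (N - s) := costar_to_star hs_le hco
        have hcardeq : (Sclass Gc (N - s)).card = (Sclass G s).card := by
          rw [hGc, sclass_compl hs_le, Finset.card_image_of_injective _ compl_injective]
        rw [if_pos (show (t + 2 ≤ (Sclass Gc (N - s)).card ∧ IsStarClass Gc (N - s)) from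
          ⟨by omega, hstar'⟩)]
        have := Nat.zero_le (if (t + 2 ≤ (Sclass G s).card ∧ IsStarClass G s)
            then (Sclass G s).card else 0)
        omega
    · have hsmall : (Sclass G s).card ≤ t + 1 := by omega
      calc (Sclass G s).card ≤ t + 1 := hsmall
        _ ≤ (t + 1) + (if (t + 2 ≤ (Sclass G s).card ∧ IsStarClass G s)
              then (Sclass G s).card else 0) := Nat.le_add_right _ _
        _ ≤ _ := Nat.le_add_right _ _
  have hsum : G.card ≤ (t + 1) * (N + 1)
      + (∑ s ∈ Finset.range (N + 1),
          (if (t + 2 ≤ (Sclass G s).card ∧ IsStarClass G s) then (Sclass G s).card else 0))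
      + (∑ s ∈ Finset.range (N + 1),
          (if (t + 2 ≤ (Sclass Gc (N - s)).card ∧ IsStarClass Gc (N - s))
              then (Sclass Gc (N - s)).card else 0)) := by
    rw [hdecomp]
    calc ∑ s ∈ Finset.range (N + 1), (Sclass G s).card
        ≤ ∑ s ∈ Finset.range (N + 1), ((t + 1)
          + (if (t + 2 ≤ (Sclass G s).card ∧ IsStarClass G s) then (Sclass G s).card else 0)
          + (if (t + 2 ≤ (Sclass Gc (N - s)).card ∧ IsStarClass Gc (N - s))
              then (Sclass Gc (N - s)).card else 0)) := Finset.sum_le_sum hterm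
      _ = _ := by
          rw [Finset.sum_add_distrib, Finset.sum_add_distrib, Finset.sum_const,
            Finset.card_range, smul_eq_mul, Nat.mul_comm]
  have hrefl : (∑ s ∈ Finset.range (N + 1),
      (if (t + 2 ≤ (Sclass Gc (N - s)).card ∧ IsStarClass Gc (N - s))
          then (Sclass Gc (N - s)).card else 0))
      = ∑ s ∈ Finset.range (N + 1),
      (if (t + 2 ≤ (Sclass Gc s).card ∧ IsStarClass Gc s) then (Sclass Gc s).card else 0) := by
    have := Finset.sum_range_reflect
      (fun s => (if (t + 2 ≤ (Sclass Gc s).card ∧ IsStarClass Gc s)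
        then (Sclass Gc s).card else 0)) (N + 1)
    simp only [show ∀ s : ℕ, N + 1 - 1 - s = N - s from fun s => by omega] at this
    exact this
  have hst1 := star_sum_le h1 h2 ht (N + 1)
  have hst2 := star_sum_le h1c h2c ht (N + 1)
  rw [hrefl] at hsum
  rw [← hN] at hst1 hst2
  omega

end Comb

section Bridge2
variable {m p t : ℕ}

def colS (A : Matrix (Fin m) (Fin p) Bool) (j : Fin p) : Finset (Fin m) :=
  Finset.univ.filter (fun i => A i j = true)

lemma mem_colS {A : Matrix (Fin m) (Fin p) Bool} {i : Fin m} {j : Fin p} :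
    i ∈ colS A j ↔ A i j = true := by simp [colS]

lemma colS_true {A : Matrix (Fin m) (Fin p) Bool} {i : Fin m} {j : Fin p}
    (h : i ∈ colS A j) : A i j = true := mem_colS.mp h

lemma colS_false {A : Matrix (Fin m) (Fin p) Bool} {i : Fin m} {j : Fin p}
    (h : i ∉ colS A j) : A i j = false := by
  cases hb : A i j
  · rfl
  · exact absurd (mem_colS.mpr hb) h

lemma colS_injective {A : Matrix (Fin m) (Fin p) Bool} (hA : TSimple 1 A) :
    Function.Injective (colS A) := by
  intro j j' h
  by_contra hne
  have hcols : ∀ i, A i j' = A i j := by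
    intro i
    have hmem : (i ∈ colS A j ↔ i ∈ colS A j') := by rw [h]
    rw [mem_colS, mem_colS] at hmem
    cases hb : A i j <;> cases hb' : A i j' <;> simp_all
  have hj : j ∈ Finset.univ.filter (fun j'' => ∀ i, A i j'' = A i j) := by simp
  have hj' : j' ∈ Finset.univ.filter (fun j'' => ∀ i, A i j'' = A i j) := by simp [hcols]
  have h2 := hA j
  have := Finset.one_lt_card.mpr ⟨j, hj, j', hj', fun hh => hne hh⟩
  omega

lemma nearCmp_of_noF1 {A : Matrix (Fin m) (Fin p) Bool}
    (hF1 : ¬ IsConfig (Fabcd 0 2 2 0) A) :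
    NearCmp (Finset.univ.image (colS A)) := by
  intro X hX Y hY
  by_contra hcon
  push_neg at hcon
  obtain ⟨h1, h2⟩ := hcon
  obtain ⟨jX, -, rfl⟩ := Finset.mem_image.mp hX
  obtain ⟨jY, -, rfl⟩ := Finset.mem_image.mp hY
  obtain ⟨a1, ha1, a2, ha2, ha12⟩ := Finset.one_lt_card.mp
    (show 1 < (colS A jX \ colS A jY).card by omega)
  obtain ⟨b1, hb1, b2, hb2, hb12⟩ := Finset.one_lt_card.mp
    (show 1 < (colS A jY \ colS A jX).card by omega)
  obtain ⟨ha1X, ha1Y⟩ := Finset.mem_sdiff.mp ha1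
  obtain ⟨ha2X, ha2Y⟩ := Finset.mem_sdiff.mp ha2
  obtain ⟨hb1Y, hb1X⟩ := Finset.mem_sdiff.mp hb1
  obtain ⟨hb2Y, hb2X⟩ := Finset.mem_sdiff.mp hb2
  have hab11 : a1 ≠ b1 := fun h => hb1X (h ▸ ha1X)
  have hab12 : a1 ≠ b2 := fun h => hb2X (h ▸ ha1X)
  have hab21 : a2 ≠ b1 := fun h => hb1X (h ▸ ha2X)
  have hab22 : a2 ≠ b2 := fun h => hb2X (h ▸ ha2X)
  have hjXY : jX ≠ jY := by
    rintro rfl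
    exact ha1Y ha1X
  apply hF1
  refine ⟨![a1, a2, b1, b2], ![jX, jY], ?_, ?_, ?_⟩
  · intro i j hij
    fin_cases i <;> fin_cases j <;> simp_all
  · intro i j hij
    fin_cases i <;> fin_cases j <;> simp_all
  · intro i j
    fin_cases i <;> fin_cases j <;>
      simp_all [Fabcd, colS_true, colS_false ha1Y, colS_false ha2Y,
        colS_false hb1X, colS_false hb2X, colS_true ha1X, colS_true ha2X,
        colS_true hb1Y, colS_true hb2Y]

lemma noDouble_of_noF2 {A : Matrix (Fin m) (Fin p) Bool} (ht : 2 ≤ t)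
    (hF2 : ¬ IsConfig (tCopies t (Fabcd 0 2 1 0)) A) :
    NoDouble t (Finset.univ.image (colS A)) := by
  intro a b c hab hac hbc P Q hPG hQG hP hQ hcards
  apply hF2
  set Pc : Finset (Fin p) := Finset.univ.filter (fun j => colS A j ∈ P) with hPcdef
  set Qc : Finset (Fin p) := Finset.univ.filter (fun j => colS A j ∈ Q) with hQcdef
  have hPcard : t ≤ Pc.card := by
    have himg : P ⊆ Pc.image (colS A) := by
      intro X hX
      obtain ⟨j, -, rfl⟩ := Finset.mem_image.mp (hPG hX)
      exact Finset.mem_image.mpr ⟨j, Finset.mem_filter.mpr ⟨Finset.mem_univ _, hX⟩, rfl⟩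
    have h1 := Finset.card_le_card himg
    have h2 := Finset.card_image_le (f := colS A) (s := Pc)
    omega
  have hQcard : t ≤ Qc.card := by
    have himg : Q ⊆ Qc.image (colS A) := by
      intro X hX
      obtain ⟨j, -, rfl⟩ := Finset.mem_image.mp (hQG hX)
      exact Finset.mem_image.mpr ⟨j, Finset.mem_filter.mpr ⟨Finset.mem_univ _, hX⟩, rfl⟩
    have h1 := Finset.card_le_card himg
    have h2 := Finset.card_image_le (f := colS A) (s := Qc)
    omega
  obtain ⟨P1, hP1, hP1card⟩ := Finset.exists_subset_card_eq hPcard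
  obtain ⟨Q1, hQ1, hQ1card⟩ := Finset.exists_subset_card_eq hQcard
  set eP := P1.orderIsoOfFin hP1card with hePdef
  set eQ := Q1.orderIsoOfFin hQ1card with heQdef
  have hdiv : ∀ j : Fin (t * 2), j.val / 2 < t := fun j => by
    have := j.isLt; omega
  set cf : Fin (t * 2) → Fin p := fun j =>
    if j.val % 2 = 0 then (eP ⟨j.val / 2, hdiv j⟩ : Fin p) else (eQ ⟨j.val / 2, hdiv j⟩ : Fin p)
    with hcf
  have hPmem : ∀ k : Fin t, colS A (eP k : Fin p) ∈ P := fun k =>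
    (Finset.mem_filter.mp (hP1 (eP k).2)).2
  have hQmem : ∀ k : Fin t, colS A (eQ k : Fin p) ∈ Q := fun k =>
    (Finset.mem_filter.mp (hQ1 (eQ k).2)).2
  have hPprop : ∀ k : Fin t, a ∈ colS A (eP k : Fin p) ∧ b ∈ colS A (eP k : Fin p)
      ∧ c ∉ colS A (eP k : Fin p) := fun k => hP _ (hPmem k)
  have hQprop : ∀ k : Fin t, a ∉ colS A (eQ k : Fin p) ∧ b ∉ colS A (eQ k : Fin p)
      ∧ c ∈ colS A (eQ k : Fin p) := fun k => hQ _ (hQmem k)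
  refine ⟨![a, b, c], cf, ?_, ?_, ?_⟩
  · intro i j hij
    fin_cases i <;> fin_cases j <;> simp_all
  · intro j j' hjj
    simp only [hcf] at hjj
    by_cases h1 : j.val % 2 = 0 <;> by_cases h2 : j'.val % 2 = 0
    · rw [if_pos h1, if_pos h2] at hjj
      have h5 := eP.injective (Subtype.coe_injective hjj)
      have hv : j.val / 2 = j'.val / 2 := congrArg Fin.val h5
      apply Fin.ext
      omega
    · rw [if_pos h1, if_neg h2] at hjj
      exfalso
      have h3 := (hPprop ⟨j.val / 2, hdiv j⟩).1
      have h4 := (hQprop ⟨j'.val / 2, hdiv j'⟩).1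
      rw [hjj] at h3
      exact h4 h3
    · rw [if_neg h1, if_pos h2] at hjj
      exfalso
      have h3 := (hPprop ⟨j'.val / 2, hdiv j'⟩).1
      have h4 := (hQprop ⟨j.val / 2, hdiv j⟩).1
      rw [← hjj] at h3
      exact h4 h3
    · rw [if_neg h1, if_neg h2] at hjj
      have h5 := eQ.injective (Subtype.coe_injective hjj)
      have hv : j.val / 2 = j'.val / 2 := congrArg Fin.val h5
      apply Fin.ext
      omega
  · intro i j
    have hrhs : tCopies t (Fabcd 0 2 1 0) i j
        = (if i.val < 2 then (if j.val % 2 = 0 then true else false)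
           else (if j.val % 2 = 0 then false else true)) := by
      have hi := i.isLt
      simp only [tCopies, Fabcd]
      by_cases h1 : i.val < 2 <;> by_cases h2 : j.val % 2 = 0 <;>
        simp [h1, h2, Fin.ext_iff, show (0:ℕ)+2 = 2 from rfl, show (0:ℕ)+2+1 = 3 from rfl]
      all_goals omega
    rw [hrhs]
    by_cases h2 : j.val % 2 = 0
    · have hcfj : cf j = (eP ⟨j.val / 2, hdiv j⟩ : Fin p) := by rw [hcf]; simp [h2]
      obtain ⟨hpa, hpb, hpc⟩ := hPprop ⟨j.val / 2, hdiv j⟩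
      fin_cases i <;> simp_all [colS_true, colS_false]
    · have hcfj : cf j = (eQ ⟨j.val / 2, hdiv j⟩ : Fin p) := by rw [hcf]; simp [h2]
      obtain ⟨hqa, hqb, hqc⟩ := hQprop ⟨j.val / 2, hdiv j⟩
      fin_cases i <;> simp_all [colS_true, colS_false]

end Bridge2

lemma matrix_bound {m p t : ℕ} (ht : 2 ≤ t) (A : Matrix (Fin m) (Fin p) Bool)
    (hs : TSimple 1 A) (hc1 : ¬ IsConfig (Fabcd 0 2 2 0) A)
    (hc2 : ¬ IsConfig (tCopies t (Fabcd 0 2 1 0)) A) :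
    p ≤ (t + 1) * (m + 1) + 2 * ((3 * t + 1) * m) := by
  have hinj := colS_injective hs
  have hcard : (Finset.univ.image (colS A)).card = p := by
    rw [Finset.card_image_of_injective _ hinj, Finset.card_univ, Fintype.card_fin]
  have hbound := master (nearCmp_of_noF1 hc1) (noDouble_of_noF2 ht hc2) ht
  rw [hcard, Fintype.card_fin] at hbound
  exact hbound

/-- **Lemma 2.1.** For `t ≥ 2`, `forb(m, {F_{0,2,2,0}, t·F_{0,2,1,0}}) = O(m)`. -/
theorem stmt_4 (t : ℕ) (ht : 2 ≤ t) :
    ∃ c : ℝ, 0 < c ∧ ∀ m : ℕ, 1 ≤ m →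
      (forbPair m (Fabcd 0 2 2 0) (tCopies t (Fabcd 0 2 1 0)) : ℝ) ≤ c * (m : ℝ) := by
  refine ⟨(8 * t + 4 : ℝ), by positivity, ?_⟩
  intro m hm
  have hnat : forbPair m (Fabcd 0 2 2 0) (tCopies t (Fabcd 0 2 1 0)) ≤ (8 * t + 4) * m := by
    apply csSup_le
    · refine ⟨0, (fun i (j : Fin 0) => j.elim0), fun j => j.elim0, ?_, ?_⟩
      · rintro ⟨r, c, -, -, -⟩
        exact (c 0).elim0
      · rintro ⟨r, c, -, -, -⟩
        exact (c ⟨0, by omega⟩).elim0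
    · rintro q ⟨A, hsA, hA1, hA2⟩
      have hq := matrix_bound ht A hsA hA1 hA2
      nlinarith
  calc (forbPair m (Fabcd 0 2 2 0) (tCopies t (Fabcd 0 2 1 0)) : ℝ)
      ≤ ((8 * t + 4) * m : ℕ) := by exact_mod_cast hnat
    _ = (8 * t + 4 : ℝ) * m := by push_cast; ring
end

section
/- Let t ≥ 2 and let a ≥ d ≥ 0 be integers with a ≥ 1. Then forb(m, t·F_{a,0,0,d}) = Θ(m^a); that is, there exist constants c1, c2 > 0 and an integer m0 such that for all m ≥ m0, c1·m^a ≤ forb(m, t·F_{a,0,0,d}) ≤ c2·m^a. -/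
/-! Read the columns of a simple matrix as the family of their sets of ones. The `a`-subsets of
the rows form a family of `C(m, a)` columns avoiding `t·F_{a,0,0,d}`, since two columns of a copy
would be the same `a`-set. Conversely, if the family avoids `t·F_{a,0,0,d}`, each pair `(S, T)`
of an `a`-set and a `d`-set has at most `2t - 1` members `X` with `S ⊆ X` and `T ⊆ Xᶜ`. A member
with `#X ≥ a` and `#Xᶜ ≥ d` is counted by at least `C(⌊m/2⌋, d)` such pairs (because `d ≤ a`),
so double counting leaves at most `(2t - 1) 4^d m^a` of them; the other members are
determined by a set of size `< a` or a complement of size `< d`, at most `(a + d) m^a` in all. -/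

open Finset

theorem Nat.choose_le_choose_of_le_half {n d a : ℕ} (hda : d ≤ a) (ha : a ≤ n / 2) :
    n.choose d ≤ n.choose a := by
  induction a, hda using Nat.le_induction with
  | base => rfl
  | succ k _ ih => exact (ih (by omega)).trans (Nat.choose_le_succ_of_lt_half_left (by omega))

theorem Nat.choose_le_four_pow_mul_choose_half {n d : ℕ} (hd : 4 * d ≤ n) :
    n.choose d ≤ 4 ^ d * (n / 2).choose d := by
  refine Nat.le_of_mul_le_mul_left ?_ d.factorial_pos
  calc d.factorial * n.choose d = n.descFactorial d :=
        (Nat.descFactorial_eq_factorial_mul_choose n d).symm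
    _ ≤ n ^ d := Nat.descFactorial_le_pow n d
    _ ≤ (4 * (n / 2 + 1 - d)) ^ d := Nat.pow_le_pow_left (by omega) d
    _ ≤ 4 ^ d * (n / 2).descFactorial d := by
      rw [Nat.mul_pow]; exact Nat.mul_le_mul_left _ (Nat.pow_sub_le_descFactorial _ d)
    _ = d.factorial * (4 ^ d * (n / 2).choose d) := by
      rw [Nat.descFactorial_eq_factorial_mul_choose]; ring

/-- One of `k`, `l` is at least `n / 2`. -/
theorem Nat.choose_half_le_choose_mul_choose {n k l a d : ℕ} (hkl : k + l = n) (hak : a ≤ k)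
    (hdl : d ≤ l) (hda : d ≤ a) (ha : 4 * a ≤ n) :
    (n / 2).choose d ≤ k.choose a * l.choose d := by
  rcases le_total (n / 2) k with hk | hl
  · calc (n / 2).choose d ≤ (n / 2).choose a := Nat.choose_le_choose_of_le_half hda (by omega)
      _ ≤ k.choose a := Nat.choose_le_choose a hk
      _ ≤ k.choose a * l.choose d := Nat.le_mul_of_pos_right _ (Nat.choose_pos hdl)
  · calc (n / 2).choose d ≤ l.choose d := Nat.choose_le_choose d (by omega)
      _ ≤ k.choose a * l.choose d := Nat.le_mul_of_pos_left _ (Nat.choose_pos hak)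

theorem Nat.pow_div_le_choose {n k : ℕ} (hk : 2 * k ≤ n) :
    (n : ℝ) ^ k / (2 ^ k * k.factorial) ≤ n.choose k := by
  have hn : (n : ℝ) ≤ 2 * (n + 1 - k : ℕ) := by exact_mod_cast (by omega : n ≤ 2 * (n + 1 - k))
  calc (n : ℝ) ^ k / (2 ^ k * k.factorial) = (n / 2 : ℝ) ^ k / k.factorial := by
        rw [div_pow, div_div]
    _ ≤ ((n + 1 - k : ℕ) : ℝ) ^ k / k.factorial := by gcongr; linarith
    _ ≤ n.choose k := Nat.pow_le_choose k n

section SetFamily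

variable {α : Type*} [Fintype α] [DecidableEq α]

theorem card_filter_card_lt_le (k : ℕ) (hα : 0 < Fintype.card α) :
    #{X : Finset α | #X < k} ≤ k * Fintype.card α ^ k := by
  have hsub : ({X : Finset α | #X < k} : Finset (Finset α)) ⊆
      (range k).biUnion fun i => powersetCard i univ := by
    intro X hX
    simp only [mem_filter, mem_univ, true_and] at hX
    simp [hX]
  calc #{X : Finset α | #X < k} ≤ ∑ i ∈ range k, #(powersetCard i (univ : Finset α)) :=
        (card_le_card hsub).trans card_biUnion_le
    _ ≤ ∑ _i ∈ range k, Fintype.card α ^ k := by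
      refine sum_le_sum fun i hi => ?_
      rw [card_powersetCard, card_univ]
      exact (Nat.choose_le_pow _ _).trans (Nat.pow_le_pow_right hα (mem_range.mp hi).le)
    _ = k * Fintype.card α ^ k := by simp

/-- Double counting of the pairs `(X, (S, T))` with `S ⊆ X`, `T ⊆ Xᶜ`, `#S = a`, `#T = d`. -/
theorem card_mul_le_of_card_filter_subset_le {𝓕 : Finset (Finset α)} {a d w N : ℕ}
    (hw : ∀ X ∈ 𝓕, w ≤ (#X).choose a * (#Xᶜ).choose d)
    (hN : ∀ S T : Finset α, #S = a → #T = d → #{X ∈ 𝓕 | S ⊆ X ∧ T ⊆ Xᶜ} ≤ N) :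
    #𝓕 * w ≤ (Fintype.card α).choose a * (Fintype.card α).choose d * N := by
  have hpairs : #(powersetCard a (univ : Finset α) ×ˢ powersetCard d (univ : Finset α)) =
      (Fintype.card α).choose a * (Fintype.card α).choose d := by
    simp [card_powersetCard]
  rw [← hpairs]
  refine card_mul_le_card_mul (fun X (ST : Finset α × Finset α) => ST.1 ⊆ X ∧ ST.2 ⊆ Xᶜ)
    (fun X hX => (hw X hX).trans ?_) (fun ST hST => ?_)
  · rw [← card_powersetCard, ← card_powersetCard, ← card_product]
    refine card_le_card fun ST hST => ?_
    simp only [mem_product, mem_powersetCard] at hST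
    simp [mem_bipartiteAbove, hST]
  · simp only [mem_product, mem_powersetCard, subset_univ, true_and] at hST
    exact hN _ _ hST.1 hST.2

theorem card_le_of_card_filter_subset_le {𝓕 : Finset (Finset α)} {a d N : ℕ} (hda : d ≤ a)
    (ha : 4 * a < Fintype.card α)
    (hN : ∀ S T : Finset α, #S = a → #T = d → #{X ∈ 𝓕 | S ⊆ X ∧ T ⊆ Xᶜ} ≤ N) :
    #𝓕 ≤ (N * 4 ^ d + a + d) * Fintype.card α ^ a := by
  set m := Fintype.card α
  set 𝓠 := {X ∈ 𝓕 | a ≤ #X ∧ d ≤ #Xᶜ}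
  have hsmall : #{X ∈ 𝓕 | #X < a} ≤ a * m ^ a :=
    (card_le_card (filter_subset_filter _ (subset_univ 𝓕))).trans
      (card_filter_card_lt_le (α := α) a (by omega))
  have hcosmall : #{X ∈ 𝓕 | #Xᶜ < d} ≤ d * m ^ a := calc
    #{X ∈ 𝓕 | #Xᶜ < d} ≤ #{Y : Finset α | #Y < d} :=
      card_le_card_of_injOn compl (fun X hX => by simp_all) compl_injective.injOn
    _ ≤ d * m ^ d := card_filter_card_lt_le d (by omega)
    _ ≤ d * m ^ a := Nat.mul_le_mul_left d (Nat.pow_le_pow_right (by omega) hda)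
  have h𝓠 : #𝓠 ≤ N * 4 ^ d * m ^ a := by
    have hw : ∀ X ∈ 𝓠, (m / 2).choose d ≤ (#X).choose a * (#Xᶜ).choose d := by
      intro X hX
      simp only [𝓠, mem_filter] at hX
      exact Nat.choose_half_le_choose_mul_choose (card_add_card_compl X) hX.2.1 hX.2.2 hda ha.le
    refine Nat.le_of_mul_le_mul_right ?_ (Nat.choose_pos (show d ≤ m / 2 by omega))
    calc #𝓠 * (m / 2).choose d ≤ m.choose a * m.choose d * N :=
          card_mul_le_of_card_filter_subset_le hw fun S T hS hT =>
            (card_le_card (filter_subset_filter _ (filter_subset _ _))).trans (hN S T hS hT)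
      _ ≤ m ^ a * (4 ^ d * (m / 2).choose d) * N := by
          gcongr
          · exact Nat.choose_le_pow _ _
          · exact Nat.choose_le_four_pow_mul_choose_half (by omega)
      _ = N * 4 ^ d * m ^ a * (m / 2).choose d := by ring
  calc #𝓕 ≤ #({X ∈ 𝓕 | #X < a} ∪ {X ∈ 𝓕 | #Xᶜ < d} ∪ 𝓠) := by
        refine card_le_card fun X hX => ?_
        simp only [𝓠, mem_union, mem_filter, hX, true_and]
        omega
    _ ≤ #{X ∈ 𝓕 | #X < a} + #{X ∈ 𝓕 | #Xᶜ < d} + #𝓠 :=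
        (card_union_le _ _).trans (Nat.add_le_add_right (card_union_le _ _) _)
    _ ≤ (N * 4 ^ d + a + d) * m ^ a := by nlinarith

end SetFamily

section Matrix

variable {m p : ℕ}

def colOnes (A : Matrix (Fin m) (Fin p) Bool) (j : Fin p) : Finset (Fin m) := {i | A i j}

theorem mem_colOnes {A : Matrix (Fin m) (Fin p) Bool} {i : Fin m} {j : Fin p} :
    i ∈ colOnes A j ↔ A i j = true := by
  simp [colOnes]

theorem mem_compl_colOnes {A : Matrix (Fin m) (Fin p) Bool} {i : Fin m} {j : Fin p} :
    i ∈ (colOnes A j)ᶜ ↔ A i j = false := by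
  simp [colOnes]

theorem Simple.injective_colOnes {A : Matrix (Fin m) (Fin p) Bool} (hA : Simple A) :
    Function.Injective (colOnes A) := fun j j' h =>
  hA <| funext fun i => Bool.eq_iff_iff.mpr <| by rw [← mem_colOnes, ← mem_colOnes, h]

theorem tCopies_Fabcd_castAdd (t a d : ℕ) (i : Fin a) (j : Fin (t * 2)) :
    tCopies t (Fabcd a 0 0 d) (Fin.castAdd d i) j = true := by
  simp [tCopies, Fabcd]

theorem tCopies_Fabcd_natAdd (t a d : ℕ) (i : Fin d) (j : Fin (t * 2)) :
    tCopies t (Fabcd a 0 0 d) (Fin.natAdd a i) j = false := by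
  simp [tCopies, Fabcd]

theorem isConfig_tCopies_Fabcd_of_le_card {t a d : ℕ} (ht : 0 < t)
    {A : Matrix (Fin m) (Fin p) Bool} {S T : Finset (Fin m)} (hS : #S = a) (hT : #T = d)
    (hcols : t * 2 ≤ #{j | S ⊆ colOnes A j ∧ T ⊆ (colOnes A j)ᶜ}) :
    IsConfig (tCopies t (Fabcd a 0 0 d)) A := by
  obtain ⟨c⟩ : Nonempty (Fin (t * 2) ↪ {j // j ∈ ({j | S ⊆ colOnes A j ∧ T ⊆ (colOnes A j)ᶜ} :
      Finset (Fin p))}) :=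
    Function.Embedding.nonempty_of_card_le (by rwa [Fintype.card_fin, Fintype.card_coe])
  have hc (j : Fin (t * 2)) : S ⊆ colOnes A (c j) ∧ T ⊆ (colOnes A (c j))ᶜ :=
    (mem_filter.mp (c j).2).2
  have hST (x : Fin a) (y : Fin d) : S.orderEmbOfFin hS x ≠ T.orderEmbOfFin hT y := fun h => by
    have hx := (hc ⟨0, by omega⟩).1 (S.orderEmbOfFin_mem hS x)
    have hy := (hc ⟨0, by omega⟩).2 (T.orderEmbOfFin_mem hT y)
    rw [h, mem_colOnes] at hx
    rw [mem_compl_colOnes, hx] at hy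
    exact Bool.noConfusion hy
  refine ⟨Fin.append (S.orderEmbOfFin hS) (T.orderEmbOfFin hT), fun j => c j,
    Fin.append_injective_iff.mpr ⟨(S.orderEmbOfFin hS).injective, (T.orderEmbOfFin hT).injective,
      hST⟩, Subtype.val_injective.comp c.injective, fun i j => ?_⟩
  refine Fin.addCases (fun i => ?_) (fun i => ?_) i
  · rw [Fin.append_left, tCopies_Fabcd_castAdd, ← mem_colOnes]
    exact (hc j).1 (S.orderEmbOfFin_mem hS i)
  · change _ = tCopies t (Fabcd a 0 0 d) (Fin.natAdd a i) j
    rw [Fin.append_right, tCopies_Fabcd_natAdd, ← mem_compl_colOnes]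
    exact (hc j).2 (T.orderEmbOfFin_mem hT i)

theorem card_filter_colOnes_le_of_not_isConfig {t a d : ℕ} (ht : 0 < t)
    {A : Matrix (Fin m) (Fin p) Bool} (hA : ¬ IsConfig (tCopies t (Fabcd a 0 0 d)) A)
    {S T : Finset (Fin m)} (hS : #S = a) (hT : #T = d) :
    #{X ∈ univ.image (colOnes A) | S ⊆ X ∧ T ⊆ Xᶜ} ≤ t * 2 - 1 := by
  rw [filter_image]
  refine card_image_le.trans ?_
  by_contra! h
  exact hA (isConfig_tCopies_Fabcd_of_le_card ht hS hT (by omega))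

theorem card_le_of_not_isConfig_tCopies_Fabcd {t a d : ℕ} (ht : 0 < t) (hda : d ≤ a)
    (hm : 4 * a < m) {A : Matrix (Fin m) (Fin p) Bool} (hA : Simple A)
    (hF : ¬ IsConfig (tCopies t (Fabcd a 0 0 d)) A) :
    p ≤ ((t * 2 - 1) * 4 ^ d + a + d) * m ^ a := by
  have hcard := card_le_of_card_filter_subset_le hda (by simpa using hm)
    fun S T hS hT => card_filter_colOnes_le_of_not_isConfig ht hF hS hT
  rwa [card_image_of_injective _ hA.injective_colOnes, card_univ, Fintype.card_fin,
    Fintype.card_fin] at hcard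

noncomputable def incidenceMatrix (𝓕 : Finset (Finset (Fin m))) : Matrix (Fin m) (Fin #𝓕) Bool :=
  fun i j => decide (i ∈ (𝓕.equivFin.symm j : Finset (Fin m)))

theorem colOnes_incidenceMatrix (𝓕 : Finset (Finset (Fin m))) (j : Fin #𝓕) :
    colOnes (incidenceMatrix 𝓕) j = 𝓕.equivFin.symm j := by
  ext i
  simp [mem_colOnes, incidenceMatrix]

theorem simple_incidenceMatrix (𝓕 : Finset (Finset (Fin m))) : Simple (incidenceMatrix 𝓕) :=
  fun j j' h => 𝓕.equivFin.symm.injective <| Subtype.ext <| by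
    rw [← colOnes_incidenceMatrix, ← colOnes_incidenceMatrix]
    exact congrArg (fun v => ({i | v i} : Finset (Fin m))) h

/-- Two columns of a copy of `t·F_{a,0,0,d}` share their `a` rows of ones, so they would be
equal `a`-sets. -/
theorem not_isConfig_incidenceMatrix_powersetCard {t a d : ℕ} (ht : 0 < t) :
    ¬ IsConfig (tCopies t (Fabcd a 0 0 d))
      (incidenceMatrix (powersetCard a (univ : Finset (Fin m)))) := by
  rintro ⟨r, c, hr, hc, h⟩
  set A := incidenceMatrix (powersetCard a (univ : Finset (Fin m)))
  set R : Finset (Fin m) := univ.image (r ∘ Fin.castAdd d)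
  have hR : #R = a := by
    simpa using card_image_of_injective univ (hr.comp (Fin.castAdd_injective a d))
  have hcol (j : Fin (t * 2)) : colOnes A (c j) = R := by
    refine (eq_of_subset_of_card_le (fun x hx => ?_) ?_).symm
    · obtain ⟨i, -, rfl⟩ := mem_image.mp hx
      exact mem_colOnes.mpr ((h _ j).trans (tCopies_Fabcd_castAdd t a d i j))
    · rw [hR, colOnes_incidenceMatrix]
      exact (mem_powersetCard.mp (equivFin _ |>.symm (c j)).2).2.le
  have h01 := hc ((simple_incidenceMatrix _).injective_colOnes
    ((hcol ⟨0, by omega⟩).trans (hcol ⟨1, by omega⟩).symm))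
  simp at h01

end Matrix

theorem le_forb {m p k n : ℕ} {F : Matrix (Fin k) (Fin n) Bool}
    {A : Matrix (Fin m) (Fin p) Bool} (hA : Simple A) (hF : ¬ IsConfig F A) : p ≤ forb m F := by
  refine le_csSup ⟨2 ^ m, ?_⟩ ⟨A, hA, hF⟩
  rintro q ⟨B, hB, -⟩
  simpa using Fintype.card_le_of_injective _ hB

theorem forb_le {m k n N : ℕ} {F : Matrix (Fin k) (Fin n) Bool}
    (h : ∀ p (A : Matrix (Fin m) (Fin p) Bool), Simple A → ¬ IsConfig F A → p ≤ N) :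
    forb m F ≤ N :=
  csSup_le' fun _ ⟨A, hA, hF⟩ => h _ A hA hF

theorem choose_le_forb_tCopies_Fabcd {m t : ℕ} (ht : 0 < t) (a d : ℕ) :
    m.choose a ≤ forb m (tCopies t (Fabcd a 0 0 d)) := by
  simpa using le_forb (simple_incidenceMatrix _) (not_isConfig_incidenceMatrix_powersetCard ht)

theorem forb_tCopies_Fabcd_le {m t a d : ℕ} (ht : 0 < t) (hda : d ≤ a) (hm : 4 * a < m) :
    forb m (tCopies t (Fabcd a 0 0 d)) ≤ ((t * 2 - 1) * 4 ^ d + a + d) * m ^ a :=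
  forb_le fun _ _ hA hF => card_le_of_not_isConfig_tCopies_Fabcd ht hda hm hA hF

theorem stmt_7_general (t a d : ℕ) (ht : 2 ≤ t) (had : d ≤ a) :
    ∃ (c1 c2 : ℝ) (m0 : ℕ), 0 < c1 ∧ 0 < c2 ∧ ∀ m : ℕ, m0 ≤ m →
      c1 * (m : ℝ) ^ a ≤ (forb m (tCopies t (Fabcd a 0 0 d)) : ℝ) ∧
      (forb m (tCopies t (Fabcd a 0 0 d)) : ℝ) ≤ c2 * (m : ℝ) ^ a := by
  have hc2 : 0 < (t * 2 - 1) * 4 ^ d + a + d := by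
    have : 0 < (t * 2 - 1) * 4 ^ d := Nat.mul_pos (by omega) (by positivity)
    omega
  refine ⟨(2 ^ a * a.factorial : ℝ)⁻¹, ((t * 2 - 1) * 4 ^ d + a + d : ℕ), 4 * a + 1,
    by positivity, by exact_mod_cast hc2, fun m hm => ⟨?_, ?_⟩⟩
  · calc (2 ^ a * a.factorial : ℝ)⁻¹ * m ^ a = m ^ a / (2 ^ a * a.factorial) := inv_mul_eq_div _ _
      _ ≤ m.choose a := Nat.pow_div_le_choose (by omega)
      _ ≤ forb m (tCopies t (Fabcd a 0 0 d)) := by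
        exact_mod_cast choose_le_forb_tCopies_Fabcd (by omega) a d
  · exact_mod_cast forb_tCopies_Fabcd_le (by omega) had (by omega)

/-- **Theorem 3.3.** For `t ≥ 2` and `a ≥ d` with `a ≥ 1`:
`forb(m, t·F_{a,0,0,d}) = Θ(m^a)`. -/
theorem stmt_7 (t a d : ℕ) (ht : 2 ≤ t) (had : d ≤ a) (ha : 1 ≤ a) :
    ∃ (c1 c2 : ℝ) (m0 : ℕ), 0 < c1 ∧ 0 < c2 ∧ ∀ m : ℕ, m0 ≤ m →
      c1 * (m : ℝ) ^ a ≤ (forb m (tCopies t (Fabcd a 0 0 d)) : ℝ) ∧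
      (forb m (tCopies t (Fabcd a 0 0 d)) : ℝ) ≤ c2 * (m : ℝ) ^ a :=
  stmt_7_general t a d ht had
end

section
/- Let F be any k×ℓ (0,1)-matrix (not necessarily simple). Then forb(m, F) = O(m^k); that is, there exists a constant c > 0 (depending on F) such that for all m ≥ 1, forb(m, F) ≤ c·m^k. -/
section Aux

open Finset

/-- `𝒜` `t`-shatters some `k`-set of rows. -/
def Shatters {m : ℕ} (k t : ℕ) (𝒜 : Finset (Fin m → Bool)) : Prop :=
  ∃ r : Fin k → Fin m, Function.Injective r ∧
    ∀ v : Fin k → Bool, t ≤ (𝒜.filter fun A => ∀ i, A (r i) = v i).card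

lemma main_bound (k : ℕ) : ∀ (t m : ℕ) (𝒜 : Finset (Fin m → Bool)),
    ¬ Shatters k t 𝒜 → 𝒜.card ≤ (t + 1) * (m + 1) ^ k := by
  classical
  induction k with
  | zero =>
    intro t m 𝒜 h
    simp only [pow_zero, mul_one]
    by_contra hc
    refine h ⟨Fin.elim0, fun i => i.elim0, fun v => ?_⟩
    have ht : t ≤ 𝒜.card := by omega
    calc t ≤ 𝒜.card := ht
      _ = (𝒜.filter fun A => ∀ i : Fin 0, A (Fin.elim0 i) = v i).card := by
          congr 1; symm; apply Finset.filter_true_of_mem; intro A _; exact fun i => i.elim0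
  | succ K IH =>
    intro t m
    induction m with
    | zero =>
      intro 𝒜 _
      calc 𝒜.card ≤ Fintype.card (Fin 0 → Bool) := Finset.card_le_univ 𝒜
        _ = 1 := by simp
        _ ≤ (t + 1) * (0 + 1) ^ (K + 1) := by simp
    | succ M IHm =>
      intro 𝒜 h
      set It : Finset (Fin M → Bool) :=
        (𝒜.filter fun A => A (Fin.last M) = true).image Fin.init with hIt
      set If : Finset (Fin M → Bool) :=
        (𝒜.filter fun A => A (Fin.last M) = false).image Fin.init with hIf
      have hinjOn : ∀ b : Bool, Set.InjOn Fin.init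
          ((𝒜.filter fun A => A (Fin.last M) = b) : Set (Fin (M+1) → Bool)) := by
        intro b A hA A' hA' hAA
        simp only [Finset.coe_filter, Set.mem_setOf_eq] at hA hA'
        have : Fin.snoc (Fin.init A) (A (Fin.last M)) =
            Fin.snoc (Fin.init A') (A' (Fin.last M)) := by rw [hAA, hA.2, hA'.2]
        rwa [Fin.snoc_init_self, Fin.snoc_init_self] at this
      have hcard : 𝒜.card = It.card + If.card := by
        rw [hIt, hIf, Finset.card_image_of_injOn (hinjOn true),
          Finset.card_image_of_injOn (hinjOn false),
          ← Finset.card_filter_add_card_filter_not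
            (p := fun A => A (Fin.last M) = true) (s := 𝒜)]
        congr 2
        apply Finset.filter_congr
        intro A _
        simp
      have memIm : ∀ b : Bool, ∀ g : Fin M → Bool,
          g ∈ (𝒜.filter fun A => A (Fin.last M) = b).image Fin.init →
          Fin.snoc g b ∈ 𝒜 := by
        intro b g hg
        obtain ⟨A, hA, hAg⟩ := Finset.mem_image.mp hg
        obtain ⟨hA𝒜, hAl⟩ := Finset.mem_filter.mp hA
        have : Fin.snoc g b = A := by rw [← hAg, ← hAl, Fin.snoc_init_self]
        rwa [this]
      -- the union avoids (K+1, t)-shattering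
      have hB : ¬ Shatters (K + 1) t (It ∪ If) := by
        rintro ⟨r, rinj, hcl⟩
        apply h
        refine ⟨Fin.castSucc ∘ r, (Fin.castSucc_injective M).comp rinj, fun v => ?_⟩
        refine le_trans (hcl v) (Finset.card_le_card_of_injOn
          (fun g => Fin.snoc g (if Fin.snoc g true ∈ 𝒜 then true else false)) ?_ ?_)
        · intro g hg
          obtain ⟨hgu, hgv⟩ := Finset.mem_filter.mp hg
          refine Finset.mem_filter.mpr ⟨?_, ?_⟩
          · by_cases hgt : Fin.snoc g true ∈ 𝒜
            · simpa [hgt] using hgt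
            · have : g ∈ If := by
                rcases Finset.mem_union.mp hgu with h1 | h2
                · exact absurd (memIm true g h1) hgt
                · exact h2
              simpa [hgt] using memIm false g this
          · intro i
            simpa [Fin.snoc_castSucc] using hgv i
        · intro g hg g' hg' hgg
          have := congrArg Fin.init hgg
          rwa [Fin.init_snoc, Fin.init_snoc] at this
      -- the intersection avoids (K, t)-shattering
      have hC : ¬ Shatters K t (It ∩ If) := by
        rintro ⟨r, rinj, hcl⟩
        apply h
        refine ⟨Fin.snoc (Fin.castSucc ∘ r) (Fin.last M), ?_, ?_⟩
        · intro i j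
          refine Fin.lastCases ?_ (fun i' => ?_) i
          · refine Fin.lastCases (fun _ => rfl) (fun j' hj => ?_) j
            rw [Fin.snoc_last, Fin.snoc_castSucc] at hj
            exact absurd hj.symm (Fin.castSucc_lt_last (r j')).ne
          · refine Fin.lastCases (fun hj => ?_) (fun j' hj => ?_) j
            · rw [Fin.snoc_last, Fin.snoc_castSucc] at hj
              exact absurd hj (Fin.castSucc_lt_last (r i')).ne
            · rw [Fin.snoc_castSucc, Fin.snoc_castSucc] at hj
              exact congrArg Fin.castSucc (rinj (Fin.castSucc_injective M hj))
        · intro v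
          refine le_trans (hcl fun i => v (Fin.castSucc i))
            (Finset.card_le_card_of_injOn (fun g => Fin.snoc g (v (Fin.last K))) ?_ ?_)
          · intro g hg
            obtain ⟨hgi, hgv⟩ := Finset.mem_filter.mp hg
            obtain ⟨hgt, hgf⟩ := Finset.mem_inter.mp hgi
            refine Finset.mem_filter.mpr ⟨?_, ?_⟩
            · cases hvl : v (Fin.last K)
              · exact memIm false g hgf
              · exact memIm true g hgt
            · intro i
              refine Fin.lastCases ?_ ?_ i
              · simp [Fin.snoc_last]
              · intro i'
                simp only [Fin.snoc_castSucc, Function.comp_apply]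
                exact hgv i'
          · intro g hg g' hg' hgg
            have := congrArg Fin.init hgg
            rwa [Fin.init_snoc, Fin.init_snoc] at this
      have hle : It.card + If.card ≤
          ((It ∪ If).card + (It ∩ If).card) := by
        rw [Finset.card_union_add_card_inter]
      calc 𝒜.card = It.card + If.card := hcard
        _ ≤ (It ∪ If).card + (It ∩ If).card := hle
        _ ≤ (t + 1) * (M + 1) ^ (K + 1) + (t + 1) * (M + 1) ^ K :=
            Nat.add_le_add (IHm _ hB) (IH t M _ hC)
        _ = (t + 1) * ((M + 1) ^ K * (M + 1 + 1)) := by ring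
        _ ≤ (t + 1) * ((M + 1 + 1) ^ K * (M + 1 + 1)) := by
            exact Nat.mul_le_mul_left _ (Nat.mul_le_mul_right _
              (Nat.pow_le_pow_left (Nat.le_succ _) K))
        _ = (t + 1) * (M + 1 + 1) ^ (K + 1) := by ring

end Aux

lemma forb_le_s9 (m : ℕ) {k ℓ : ℕ} (F : Matrix (Fin k) (Fin ℓ) Bool) :
    forb m F ≤ (ℓ + 1) * (m + 1) ^ k := by
  classical
  apply csSup_le'
  rintro p ⟨A, hS, hF⟩
  set col : Fin p → (Fin m → Bool) := fun j i => A i j with hcol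
  set 𝒜 : Finset (Fin m → Bool) := Finset.univ.image col with h𝒜
  have hcard : 𝒜.card = p := by
    rw [h𝒜, Finset.card_image_of_injective _ hS, Finset.card_univ, Fintype.card_fin]
  have hnosh : ¬ Shatters k ℓ 𝒜 := by
    rintro ⟨r, rinj, hcl⟩
    apply hF
    -- column classes in index form
    set Cv : (Fin k → Bool) → Finset (Fin p) :=
      fun v => Finset.univ.filter fun j' => ∀ i, A (r i) j' = v i with hCv
    have hCvcard : ∀ v, ℓ ≤ (Cv v).card := by
      intro v
      have himg : (𝒜.filter fun g => ∀ i, g (r i) = v i) = (Cv v).image col := by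
        rw [h𝒜, Finset.filter_image, hCv]
      have := hcl v
      rwa [himg, Finset.card_image_of_injective _ hS] at this
    set Jv : (Fin k → Bool) → Finset (Fin ℓ) :=
      fun v => Finset.univ.filter fun j => (fun i => F i j) = v with hJv
    have hJvcard : ∀ v, (Jv v).card ≤ ℓ := by
      intro v
      calc (Jv v).card ≤ (Finset.univ : Finset (Fin ℓ)).card := Finset.card_filter_le _ _
        _ = ℓ := by simp
    have hemb : ∀ v : Fin k → Bool, Nonempty ({x // x ∈ Jv v} ↪ {x // x ∈ Cv v}) := by
      intro v
      apply Function.Embedding.nonempty_of_card_le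
      rw [Fintype.card_coe, Fintype.card_coe]
      exact le_trans (hJvcard v) (hCvcard v)
    set e : ∀ v : Fin k → Bool, {x // x ∈ Jv v} ↪ {x // x ∈ Cv v} :=
      fun v => (hemb v).some with he
    have hmemJ : ∀ j : Fin ℓ, j ∈ Jv (fun i => F i j) :=
      fun j => Finset.mem_filter.mpr ⟨Finset.mem_univ j, rfl⟩
    set c : Fin ℓ → Fin p := fun j => ((e (fun i => F i j)) ⟨j, hmemJ j⟩ : _) with hc
    have hcmem : ∀ j : Fin ℓ, ∀ i, A (r i) (c j) = F i j := by
      intro j i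
      have := ((e (fun i => F i j)) ⟨j, hmemJ j⟩).2
      exact (Finset.mem_filter.mp this).2 i
    refine ⟨r, c, rinj, ?_, fun i j => hcmem j i⟩
    intro j j' hjj
    have hv : (fun i => F i j) = (fun i => F i j') := by
      funext i
      rw [← hcmem j i, hjj, hcmem j' i]
    have key : ∀ (v v' : Fin k → Bool) (hm : j ∈ Jv v) (hm' : j' ∈ Jv v'),
        v = v' → ((e v ⟨j, hm⟩ : Fin p)) = ((e v' ⟨j', hm'⟩ : Fin p)) → j = j' := by
      rintro v v' hm hm' rfl hee
      have := (e v).injective (Subtype.coe_injective hee)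
      exact congrArg Subtype.val this
    exact key _ _ (hmemJ j) (hmemJ j') hv hjj
  have := main_bound k ℓ m 𝒜 hnosh
  omega

/-- **Theorem 4.3 (Füredi).** For any `k × ℓ` (0,1)-matrix `F` (not necessarily simple),
`forb(m, F) = O(m^k)`. -/
theorem stmt_9 {k ℓ : ℕ} (F : Matrix (Fin k) (Fin ℓ) Bool) :
    ∃ c : ℝ, 0 < c ∧ ∀ m : ℕ, 1 ≤ m → (forb m F : ℝ) ≤ c * (m : ℝ) ^ k := by
  refine ⟨((ℓ + 1) * 2 ^ k : ℝ), by positivity, fun m hm => ?_⟩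
  have h1 : forb m F ≤ (ℓ + 1) * (m + 1) ^ k := forb_le_s9 m F
  have h2 : (ℓ + 1) * (m + 1) ^ k ≤ (ℓ + 1) * (2 * m) ^ k :=
    Nat.mul_le_mul_left _ (Nat.pow_le_pow_left (by omega) k)
  calc (forb m F : ℝ) ≤ (((ℓ + 1) * (2 * m) ^ k : ℕ) : ℝ) := by
        exact_mod_cast le_trans h1 h2
    _ = (ℓ + 1) * 2 ^ k * (m : ℝ) ^ k := by push_cast; ring
end

section
/- Let t ≥ 2 and k ≥ 2 be integers. Then forb(m, {t·I_k, t·I_k^c, t·T_k}) = Θ(m); that is, there exist constants c1, c2 > 0 and an integer m0 such that for all m ≥ m0, c1·m ≤ forb(m, {t·I_k, t·I_k^c, t·T_k}) ≤ c2·m. -/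
/-- The `k × k` identity matrix (as a (0,1)-matrix). -/
def Imat (k : ℕ) : Matrix (Fin k) (Fin k) Bool := fun i j => decide (i = j)

/-- The (0,1)-complement of the `k × k` identity matrix. -/
def Icmat (k : ℕ) : Matrix (Fin k) (Fin k) Bool := fun i j => decide (i ≠ j)

/-- The `k × k` upper triangular (0,1)-matrix: entry `(i,j)` is 1 iff `i ≤ j`. -/
def Tmat (k : ℕ) : Matrix (Fin k) (Fin k) Bool := fun i j => decide (i ≤ j)

/-- `forb(m, {F1, F2, F3})` for a triple of forbidden configurations. -/
noncomputable def forbTriple (m : ℕ) {k1 n1 k2 n2 k3 n3 : ℕ}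
    (F1 : Matrix (Fin k1) (Fin n1) Bool) (F2 : Matrix (Fin k2) (Fin n2) Bool)
    (F3 : Matrix (Fin k3) (Fin n3) Bool) : ℕ :=
  sSup { p : ℕ | ∃ A : Matrix (Fin m) (Fin p) Bool,
    Simple A ∧ ¬ IsConfig F1 A ∧ ¬ IsConfig F2 A ∧ ¬ IsConfig F3 A }

/-!
The lower bound comes from `I_m`: each `t·F` has a row with two `1`s, while every row of `I_m`
has a single `1`.

For the upper bound, view a simple matrix as its set `G` of columns and induct on the number of
rows `m`. Call `f ∈ G` split at row `i` if `f i = 0` and flipping that entry gives another column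
of `G`. Deleting row `i` merges exactly the split pairs, so if some row has at most
`c = t·2^N` split columns (`N = 5^(4k)`), we lose at most `c` columns and recurse.
Otherwise, for each of the first `N` rows `i` the pigeonhole principle gives a pattern `g i` on
those rows shared by `t` columns split at `i`; so both `g i` and `g i` with entry `i` flipped to
`1` occur `t` times. Ramsey's theorem for the colouring `{i < j} ↦ (g i j, g j i)` in four
colours yields `k` rows on which the patterns are homogeneous, and the four colours produce
`t·I_k`, `t·I_k^c` or `t·T_k` (once with the rows reversed).
-/

namespace Forb

open Finset Function

variable {m k n t : ℕ}

theorem exists_injective_leftHomogeneous {α C : Type*} [Fintype C] [Nonempty C]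
    (col : α → α → C) (n : ℕ) (T : Finset α) (hT : (Fintype.card C + 1) ^ n ≤ #T) :
    ∃ (a : Fin n → α) (c : Fin n → C), Injective a ∧ (∀ i, a i ∈ T) ∧
      ∀ i j, i < j → col (a i) (a j) = c i := by
  classical
  induction n generalizing T with
  | zero =>
    exact ⟨finZeroElim, finZeroElim, fun i => i.elim0, fun i => i.elim0, fun i => i.elim0⟩
  | succ n ih =>
    obtain ⟨x, hx⟩ : T.Nonempty := card_pos.mp (lt_of_lt_of_le (by positivity) hT)
    have hcard : #(univ : Finset C) * (Fintype.card C + 1) ^ n ≤ #(T.erase x) := by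
      rw [card_univ, card_erase_of_mem hx]
      refine Nat.le_sub_one_of_lt (lt_of_lt_of_le ?_ hT)
      calc Fintype.card C * (Fintype.card C + 1) ^ n
          < Fintype.card C * (Fintype.card C + 1) ^ n + (Fintype.card C + 1) ^ n :=
            Nat.lt_add_of_pos_right (by positivity)
        _ = (Fintype.card C + 1) ^ (n + 1) := by ring
    obtain ⟨c₀, -, hfib⟩ :=
      exists_le_card_fiber_of_mul_le_card_of_maps_to (fun y _ => mem_univ (col x y))
        univ_nonempty hcard
    obtain ⟨a, c, ha, haT, hac⟩ := ih _ hfib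
    have haT' : ∀ i, a i ∈ T.erase x ∧ col x (a i) = c₀ := fun i => mem_filter.mp (haT i)
    have hxa : x ∉ Set.range a := fun ⟨i, hi⟩ => by simpa [hi] using (haT' i).1
    refine ⟨Fin.cons x a, Fin.cons c₀ c, Fin.cons_injective_iff.mpr ⟨hxa, ha⟩, ?_, ?_⟩
    · exact Fin.cases hx fun i => mem_of_mem_erase (haT' i).1
    · intro i j hij
      induction j using Fin.cases with
      | zero => exact absurd hij (Fin.not_lt_zero i)
      | succ j =>
        induction i using Fin.cases with
        | zero => simpa using (haT' j).2
        | succ i => simpa using hac i j (Fin.succ_lt_succ_iff.mp hij)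

theorem exists_injective_homogeneous {α C : Type*} [Fintype α] [Fintype C] [Nonempty C]
    (col : α → α → C) (k : ℕ)
    (hα : (Fintype.card C + 1) ^ (Fintype.card C * k) ≤ Fintype.card α) :
    ∃ a : Fin k → α, Injective a ∧ ∃ c, ∀ i j, i < j → col (a i) (a j) = c := by
  classical
  obtain ⟨a, c, ha, -, hac⟩ := exists_injective_leftHomogeneous col _ univ hα
  obtain ⟨c₀, hc₀⟩ := Fintype.exists_le_card_fiber_of_mul_le_card c (n := k) (by simp)
  set e := orderEmbOfCardLe _ hc₀
  have he : ∀ i, c (e i) = c₀ := fun i => (mem_filter.mp (orderEmbOfCardLe_mem _ hc₀ i)).2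
  refine ⟨a ∘ e, ha.comp e.injective, c₀, fun i j hij => ?_⟩
  rw [comp_apply, comp_apply, hac _ _ (e.strictMono hij), he]

def splits (G : Finset (Fin m → Bool)) (i : Fin m) : Finset (Fin m → Bool) :=
  {f ∈ G | f i = false ∧ update f i true ∈ G}

def HasConfigCopies (t : ℕ) (M : Matrix (Fin k) (Fin n) Bool) (G : Finset (Fin m → Bool)) :
    Prop :=
  ∃ r : Fin k → Fin m, Injective r ∧ ∀ a, t ≤ #{f ∈ G | ∀ b, f (r b) = M b a}

theorem card_le_two_pow (G : Finset (Fin m → Bool)) : #G ≤ 2 ^ m := by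
  simpa using card_le_univ G

theorem card_le_card_image_removeNth_add_card_splits (G : Finset (Fin (m + 1) → Bool))
    (i : Fin (m + 1)) : #G ≤ #(G.image (Fin.removeNth i)) + #(splits G i) := by
  set S := (splits G i).image (update · i true)
  have hinj : Set.InjOn (Fin.removeNth (α := fun _ => Bool) i) (G \ S : Finset _) := by
    have upper : ∀ f₁ ∈ G, ∀ f₂ ∈ G, Fin.removeNth i f₁ = Fin.removeNth i f₂ →
        f₁ i = false → f₂ i = true → f₂ ∈ S := by
      intro f₁ h₁ f₂ h₂ he hf₁ hf₂
      have hf : update f₁ i true = f₂ := by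
        rw [← Fin.insertNth_removeNth, he, ← hf₂, Fin.insertNth_self_removeNth]
      exact mem_image.mpr ⟨f₁, mem_filter.mpr ⟨h₁, hf₁, hf ▸ h₂⟩, hf⟩
    intro f₁ h₁ f₂ h₂ he
    simp only [coe_sdiff, Set.mem_sdiff, mem_coe] at h₁ h₂
    rw [← Fin.insertNth_self_removeNth i f₁, ← Fin.insertNth_self_removeNth i f₂, he]
    cases hf₁ : f₁ i <;> cases hf₂ : f₂ i
    · rfl
    · exact absurd (upper f₁ h₁.1 f₂ h₂.1 he hf₁ hf₂) h₂.2
    · exact absurd (upper f₂ h₂.1 f₁ h₁.1 he.symm hf₂ hf₁) h₁.2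
    · rfl
  calc #G ≤ #(G \ S) + #S := card_le_card_sdiff_add_card
    _ ≤ #(G.image (Fin.removeNth i)) + #(splits G i) :=
      add_le_add (card_le_card_of_injOn _ (fun f hf => mem_image_of_mem _ (mem_sdiff.mp hf).1)
        hinj) card_image_le

theorem HasConfigCopies.of_image_removeNth {M : Matrix (Fin k) (Fin n) Bool}
    {G : Finset (Fin (m + 1) → Bool)} {i : Fin (m + 1)}
    (h : HasConfigCopies t M (G.image (Fin.removeNth i))) : HasConfigCopies t M G := by
  obtain ⟨r, hr, hcount⟩ := h
  refine ⟨i.succAbove ∘ r, i.succAbove_right_injective.comp hr, fun a => ?_⟩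
  have := hcount a
  rw [filter_image] at this
  exact this.trans card_image_le

theorem exists_split_pattern {N : ℕ} (ht : 0 < t) {G : Finset (Fin m → Bool)}
    {q : Fin N → Fin m} (hq : Injective q) (i : Fin N) (h : t * 2 ^ N ≤ #(splits G (q i))) :
    ∃ g : Fin N → Bool, g i = false ∧ t ≤ #{f ∈ G | f ∘ q = g} ∧
      t ≤ #{f ∈ G | f ∘ q = update g i true} := by
  obtain ⟨g, -, hg⟩ :=
    exists_le_card_fiber_of_mul_le_card_of_maps_to (f := fun f : Fin m → Bool => f ∘ q)
      (fun f _ => mem_univ (f ∘ q)) univ_nonempty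
      (by rwa [card_univ, Fintype.card_fun, Fintype.card_bool, Fintype.card_fin, mul_comm])
  have hF : ∀ f ∈ {f ∈ splits G (q i) | f ∘ q = g},
      f ∈ G ∧ f (q i) = false ∧ update f (q i) true ∈ G ∧ f ∘ q = g := by
    simp +contextual [splits]
  obtain ⟨f₀, hf₀⟩ := card_pos.mp (ht.trans_le hg)
  refine ⟨g, ?_, hg.trans (card_le_card fun f hf => ?_),
    hg.trans (card_le_card_of_injOn (update · (q i) true) (fun f hf => ?_) ?_)⟩
  · rw [← (hF f₀ hf₀).2.2.2, comp_apply, (hF f₀ hf₀).2.1]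
  · exact mem_filter.mpr ⟨(hF f hf).1, (hF f hf).2.2.2⟩
  · obtain ⟨-, -, hfG, hfg⟩ := hF f hf
    exact mem_filter.mpr ⟨hfG, by rw [update_comp_eq_of_injective _ hq, hfg]⟩
  · intro f₁ h₁ f₂ h₂ he
    funext x
    by_cases hx : x = q i
    · rw [hx, (hF f₁ h₁).2.1, (hF f₂ h₂).2.1]
    · simpa [hx] using congrFun he x

def Realizable {α : Type*} (P : (α → Bool) → Prop) (M : Matrix (Fin k) (Fin n) Bool) : Prop :=
  ∃ y : Fin k → α, Injective y ∧ ∀ a, ∃ v, P v ∧ ∀ b, v (y b) = M b a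

theorem realizable_of_homogeneous {α : Type*} [DecidableEq α] {P : (α → Bool) → Prop}
    {g : α → α → Bool} (hdiag : ∀ u, g u u = false)
    (hP : ∀ u, P (g u) ∧ P (update (g u) u true))
    {x : Fin k → α} (hx : Injective x) {b₁ b₂ : Bool}
    (hcol : ∀ a b, a < b → (g (x a) (x b), g (x b) (x a)) = (b₁, b₂)) :
    Realizable P (Imat k) ∨ Realizable P (Icmat k) ∨ Realizable P (Tmat k) := by
  have hg : ∀ a b, g (x a) (x b) = if a = b then false else if a < b then b₁ else b₂ := by
    intro a b
    rcases lt_trichotomy a b with h | rfl | h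
    · simp [h.ne, h, (Prod.mk.inj (hcol a b h)).1]
    · simp [hdiag]
    · simp [h.ne', not_lt.mpr h.le, (Prod.mk.inj (hcol b a h)).2]
  have hupd : ∀ a b,
      update (g (x a)) (x a) true (x b) = if b = a then true else g (x a) (x b) := by
    simp [update_apply, hx.eq_iff]
  cases b₁ <;> cases b₂
  · refine .inl ⟨x, hx, fun a => ⟨_, (hP (x a)).2, fun b => ?_⟩⟩
    simp [hupd, hg, Imat]
  · refine .inr (.inr ⟨x, hx, fun a => ⟨_, (hP (x a)).2, fun b => ?_⟩⟩)
    simp [hupd, hg, Tmat]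
    grind
  · refine .inr (.inr ⟨x ∘ Fin.rev, hx.comp Fin.rev_injective,
      fun a => ⟨_, (hP (x a.rev)).2, fun b => ?_⟩⟩)
    simp [hupd, hg, Tmat]
    grind
  · refine .inr (.inl ⟨x, hx, fun a => ⟨_, (hP (x a)).1, fun b => ?_⟩⟩)
    simp [hg, Icmat, eq_comm]

theorem HasConfigCopies.of_realizable {N : ℕ} {G : Finset (Fin m → Bool)} {q : Fin N → Fin m}
    (hq : Injective q) {M : Matrix (Fin k) (Fin n) Bool}
    (h : Realizable (fun v => t ≤ #{f ∈ G | f ∘ q = v}) M) : HasConfigCopies t M G := by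
  obtain ⟨y, hy, hcol⟩ := h
  refine ⟨q ∘ y, hq.comp hy, fun a => ?_⟩
  obtain ⟨v, hv, hvM⟩ := hcol a
  refine hv.trans (card_le_card fun f hf => ?_)
  rw [mem_filter] at hf ⊢
  exact ⟨hf.1, fun b => by rw [← hvM b, ← hf.2, comp_apply, comp_apply]⟩

theorem hasConfigCopies_of_le_card_splits (ht : 0 < t) {G : Finset (Fin m → Bool)}
    (hm : 5 ^ (4 * k) ≤ m) (hsplit : ∀ i, t * 2 ^ 5 ^ (4 * k) ≤ #(splits G i)) :
    HasConfigCopies t (Imat k) G ∨ HasConfigCopies t (Icmat k) G ∨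
      HasConfigCopies t (Tmat k) G := by
  have hq : Injective (Fin.castLE hm) := Fin.castLE_injective hm
  choose g hdiag hP using fun i => exists_split_pattern ht hq i (hsplit (Fin.castLE hm i))
  obtain ⟨x, hx, ⟨b₁, b₂⟩, hcol⟩ :=
    exists_injective_homogeneous (fun u v => (g u v, g v u)) k (by simp)
  rcases realizable_of_homogeneous (P := fun v => t ≤ #{f ∈ G | f ∘ Fin.castLE hm = v})
    hdiag hP hx hcol with h | h | h
  exacts [.inl (.of_realizable hq h), .inr (.inl (.of_realizable hq h)),
    .inr (.inr (.of_realizable hq h))]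

theorem card_le_of_not_hasConfigCopies (ht : 0 < t) (k m : ℕ) (G : Finset (Fin m → Bool))
    (h₁ : ¬ HasConfigCopies t (Imat k) G) (h₂ : ¬ HasConfigCopies t (Icmat k) G)
    (h₃ : ¬ HasConfigCopies t (Tmat k) G) : #G ≤ t * 2 ^ 5 ^ (4 * k) * (m + 1) := by
  set c := t * 2 ^ 5 ^ (4 * k)
  induction m with
  | zero => simpa using (card_le_two_pow G).trans (Nat.le_mul_of_pos_right _ (by positivity))
  | succ m ih =>
    by_cases hsplit : ∀ i, c ≤ #(splits G i)
    · have hm : 5 ^ (4 * k) ≤ m + 1 := (Nat.pow_le_pow_iff_right one_lt_two).mp <|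
        calc 2 ^ 5 ^ (4 * k) ≤ c := Nat.le_mul_of_pos_left _ ht
          _ ≤ #(splits G 0) := hsplit 0
          _ ≤ #G := card_le_card (filter_subset _ _)
          _ ≤ 2 ^ (m + 1) := card_le_two_pow G
      rcases hasConfigCopies_of_le_card_splits ht hm hsplit with h | h | h
      exacts [absurd h h₁, absurd h h₂, absurd h h₃]
    · obtain ⟨i, hi⟩ := not_forall.mp hsplit
      calc #G ≤ #(G.image (Fin.removeNth i)) + #(splits G i) :=
            card_le_card_image_removeNth_add_card_splits G i
        _ ≤ c * (m + 1) + c :=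
            add_le_add (ih _ (fun h => h₁ h.of_image_removeNth)
              (fun h => h₂ h.of_image_removeNth) (fun h => h₃ h.of_image_removeNth))
              (not_le.mp hi).le
        _ = c * (m + 1 + 1) := by ring

theorem simple_Imat (k : ℕ) : Simple (Imat k) := fun a b h => by
  simpa [Imat] using congrFun h a

theorem simple_Icmat (k : ℕ) : Simple (Icmat k) := fun a b h => by
  simpa [Icmat] using congrFun h a

theorem simple_Tmat (k : ℕ) : Simple (Tmat k) := fun a b h =>
  le_antisymm (by simpa [Tmat] using congrFun h a) (by simpa [Tmat] using congrFun h b)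

theorem tCopies_apply (M : Matrix (Fin k) (Fin n) Bool) (i : Fin k) (j : Fin (t * n)) :
    tCopies t M i j = M i (finProdFinEquiv.symm j).2 := rfl

theorem Simple.le_two_pow {p : ℕ} {A : Matrix (Fin m) (Fin p) Bool} (hA : Simple A) :
    p ≤ 2 ^ m := by
  simpa [card_image_of_injective _ hA] using card_le_two_pow (univ.image fun j i => A i j)

theorem isConfig_tCopies_of_hasConfigCopies {p : ℕ} {M : Matrix (Fin k) (Fin n) Bool}
    (hM : Simple M) {A : Matrix (Fin m) (Fin p) Bool} (hA : Simple A)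
    (h : HasConfigCopies t M (univ.image fun j i => A i j)) : IsConfig (tCopies t M) A := by
  obtain ⟨r, hr, hcount⟩ := h
  have hcols : ∀ a, ∃ F : Fin t → Fin p, Injective F ∧ ∀ s b, A (r b) (F s) = M b a := by
    intro a
    have hle := hcount a
    rw [filter_image, card_image_of_injective _ hA] at hle
    exact ⟨orderEmbOfCardLe _ hle, (orderEmbOfCardLe _ hle).injective,
      fun s => (mem_filter.mp (orderEmbOfCardLe_mem _ hle s)).2⟩
  choose F hF hFM using hcols
  have hF' : Injective fun x : Fin t × Fin n => F x.2 x.1 := by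
    rintro ⟨s₁, a₁⟩ ⟨s₂, a₂⟩ h
    obtain rfl : a₁ = a₂ := hM <| funext fun b => by
      simp only [← hFM a₁ s₁ b, ← hFM a₂ s₂ b, show F a₁ s₁ = F a₂ s₂ from h]
    exact Prod.ext (hF a₁ h) rfl
  exact ⟨r, _ ∘ finProdFinEquiv.symm, hr, hF'.comp finProdFinEquiv.symm.injective,
    fun i j => hFM _ _ _⟩

theorem not_isConfig_tCopies_Imat (ht : 1 < t) {M : Matrix (Fin k) (Fin n) Bool} {i : Fin k}
    {a : Fin n} (hM : M i a = true) : ¬ IsConfig (tCopies t M) (Imat m) := by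
  rintro ⟨r, c, -, hc, hrc⟩
  have hcol : ∀ s : Fin t, r i = c (finProdFinEquiv (s, a)) := fun s => by
    simpa [Imat, tCopies_apply, hM] using hrc i (finProdFinEquiv (s, a))
  have := finProdFinEquiv.injective (hc ((hcol ⟨0, by omega⟩).symm.trans (hcol ⟨1, ht⟩)))
  simp at this

theorem card_le_of_not_isConfig (ht : 0 < t) {p : ℕ} {A : Matrix (Fin m) (Fin p) Bool}
    (hA : Simple A) (h₁ : ¬ IsConfig (tCopies t (Imat k)) A)
    (h₂ : ¬ IsConfig (tCopies t (Icmat k)) A) (h₃ : ¬ IsConfig (tCopies t (Tmat k)) A) :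
    p ≤ t * 2 ^ 5 ^ (4 * k) * (m + 1) := by
  have := card_le_of_not_hasConfigCopies ht k m (univ.image fun j i => A i j)
    (fun h => h₁ (isConfig_tCopies_of_hasConfigCopies (simple_Imat k) hA h))
    (fun h => h₂ (isConfig_tCopies_of_hasConfigCopies (simple_Icmat k) hA h))
    (fun h => h₃ (isConfig_tCopies_of_hasConfigCopies (simple_Tmat k) hA h))
  rwa [card_image_of_injective _ hA, card_univ, Fintype.card_fin] at this

section forbTriple

variable {k₁ n₁ k₂ n₂ k₃ n₃ : ℕ} {F₁ : Matrix (Fin k₁) (Fin n₁) Bool}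
  {F₂ : Matrix (Fin k₂) (Fin n₂) Bool} {F₃ : Matrix (Fin k₃) (Fin n₃) Bool}

theorem forbTriple_le {B : ℕ} (h : ∀ p (A : Matrix (Fin m) (Fin p) Bool), Simple A →
      ¬ IsConfig F₁ A → ¬ IsConfig F₂ A → ¬ IsConfig F₃ A → p ≤ B) :
    forbTriple m F₁ F₂ F₃ ≤ B :=
  csSup_le' fun p ⟨A, hA, h₁, h₂, h₃⟩ => h p A hA h₁ h₂ h₃

theorem le_forbTriple {p : ℕ} {A : Matrix (Fin m) (Fin p) Bool} (hA : Simple A)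
    (h₁ : ¬ IsConfig F₁ A) (h₂ : ¬ IsConfig F₂ A) (h₃ : ¬ IsConfig F₃ A) :
    p ≤ forbTriple m F₁ F₂ F₃ :=
  le_csSup ⟨2 ^ m, fun _ ⟨_, hB, _⟩ => Simple.le_two_pow hB⟩ ⟨A, hA, h₁, h₂, h₃⟩

end forbTriple

end Forb

open Forb in
/-- **Theorem 4.5.** For `t, k ≥ 2`, `forb(m, {t·I_k, t·I_k^c, t·T_k}) = Θ(m)`. -/
theorem stmt_11 (t k : ℕ) (ht : 2 ≤ t) (hk : 2 ≤ k) :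
    ∃ (c1 c2 : ℝ) (m0 : ℕ), 0 < c1 ∧ 0 < c2 ∧ ∀ m : ℕ, m0 ≤ m →
      c1 * (m : ℝ) ≤
        (forbTriple m (tCopies t (Imat k)) (tCopies t (Icmat k)) (tCopies t (Tmat k)) : ℝ) ∧
      (forbTriple m (tCopies t (Imat k)) (tCopies t (Icmat k)) (tCopies t (Tmat k)) : ℝ) ≤
        c2 * (m : ℝ) := by
  set c := t * 2 ^ 5 ^ (4 * k)
  refine ⟨1, 2 * c, 1, one_pos, by positivity, fun m hm => ⟨?_, ?_⟩⟩
  · have h₀ : 0 < k := by omega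
    have hlow := le_forbTriple (simple_Imat m)
      (not_isConfig_tCopies_Imat ht (M := Imat k) (i := ⟨0, h₀⟩) (a := ⟨0, h₀⟩)
        (by simp [Imat]))
      (not_isConfig_tCopies_Imat ht (M := Icmat k) (i := ⟨1, hk⟩) (a := ⟨0, h₀⟩)
        (by simp [Icmat]))
      (not_isConfig_tCopies_Imat ht (M := Tmat k) (i := ⟨0, h₀⟩) (a := ⟨0, h₀⟩)
        (by simp [Tmat]))
    rw [one_mul]
    exact_mod_cast hlow
  · have hup : forbTriple m _ _ _ ≤ c * (m + 1) :=
      forbTriple_le fun _ _ hA => card_le_of_not_isConfig (by omega) hA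
    have hm' : (1 : ℝ) ≤ m := by exact_mod_cast hm
    calc (forbTriple m _ _ _ : ℝ) ≤ c * (m + 1) := by exact_mod_cast hup
      _ ≤ 2 * c * m := by nlinarith [(Nat.cast_nonneg c : (0 : ℝ) ≤ c)]
end

section
/- Let k ≥ 3 and m ≥ 1 be integers, let a, b ≥ 1 be integers with a + b = k − 1, and let C ∪ D = [m] be a partition of [m]. Let G be a bipartite graph whose two vertex classes are the a-element subsets of C and the b-element subsets of D, and suppose G has at least 2k·m^{k−2} edges. Then there is a subgraph G' of G with at least half as many edges as G such that for every edge (S,T) of G' (with S an a-subset of C and T a b-subset of D), the degree of S in G' is at least (b + 1/2)·m^{b−1} and the degree of T in G' is at least (a + 1/2)·m^{a−1}. -/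
lemma aux_del {α β : Type*} [DecidableEq α] [DecidableEq β]
    (tS tT : ℝ) (hS : 0 ≤ tS) (hT : 0 ≤ tT) :
    ∀ n (E : Finset (α × β)), E.card ≤ n →
      ∃ E' ⊆ E,
        ((E.card : ℝ) ≤ (E'.card : ℝ) + tS * ((E.image Prod.fst).card : ℝ)
            + tT * ((E.image Prod.snd).card : ℝ)) ∧
        ∀ e ∈ E', tS ≤ ((E'.filter fun f => f.1 = e.1).card : ℝ) ∧
            tT ≤ ((E'.filter fun f => f.2 = e.2).card : ℝ) := by
  intro n
  induction n with
  | zero =>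
    intro E hE
    refine ⟨∅, Finset.empty_subset _, ?_, by simp⟩
    have : E.card = 0 := Nat.le_zero.mp hE
    simp [this]
    positivity
  | succ n ih =>
    intro E hEn
    by_cases hgood : ∀ e ∈ E, tS ≤ ((E.filter fun f => f.1 = e.1).card : ℝ) ∧
        tT ≤ ((E.filter fun f => f.2 = e.2).card : ℝ)
    · refine ⟨E, le_refl _, ?_, hgood⟩
      have h1 : 0 ≤ tS * ((E.image Prod.fst).card : ℝ) := by positivity
      have h2 : 0 ≤ tT * ((E.image Prod.snd).card : ℝ) := by positivity
      linarith
    · push_neg at hgood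
      obtain ⟨e, heE, hbad⟩ := hgood
      rcases le_or_gt tS ((E.filter fun f => f.1 = e.1).card : ℝ) with h1 | h1
      · -- second coordinate bad
        have h2 : ((E.filter fun f => f.2 = e.2).card : ℝ) < tT := hbad h1
        set F : Finset (α × β) := E.filter (fun f => ¬ f.2 = e.2) with hF
        have hFE : F ⊆ E := Finset.filter_subset _ _
        have heF : e ∉ F := by simp [hF]
        have hFlt : F.card < E.card :=
          Finset.card_lt_card (Finset.ssubset_iff_of_subset hFE |>.mpr ⟨e, heE, heF⟩)
        obtain ⟨E', hE'F, hcard, hgood'⟩ := ih F (by omega)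
        refine ⟨E', hE'F.trans hFE, ?_, hgood'⟩
        have hsplit : (E.filter fun f => f.2 = e.2).card + F.card = E.card :=
          Finset.card_filter_add_card_filter_not _
        have himS : (F.image Prod.fst).card ≤ (E.image Prod.fst).card :=
          Finset.card_le_card (Finset.image_subset_image hFE)
        have himT : (F.image Prod.snd).card + 1 ≤ (E.image Prod.snd).card := by
          have hsub : F.image Prod.snd ⊆ (E.image Prod.snd).erase e.2 := by
            intro x hx
            obtain ⟨f, hf, rfl⟩ := Finset.mem_image.mp hx
            have := (Finset.mem_filter.mp hf).2
            exact Finset.mem_erase.mpr ⟨this, Finset.mem_image_of_mem _ (hFE hf)⟩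
          have hmem : e.2 ∈ E.image Prod.snd := Finset.mem_image_of_mem _ heE
          have hx1 := Finset.card_le_card hsub
          have hx2 := Finset.card_erase_of_mem hmem
          have hx3 := Finset.card_pos.mpr ⟨_, hmem⟩
          omega
        have hc1 : tS * ((F.image Prod.fst).card : ℝ) ≤ tS * ((E.image Prod.fst).card : ℝ) := by
          apply mul_le_mul_of_nonneg_left _ hS; exact_mod_cast himS
        have hc2 : tT * (((F.image Prod.snd).card : ℝ) + 1) ≤ tT * ((E.image Prod.snd).card : ℝ) := by
          apply mul_le_mul_of_nonneg_left _ hT; exact_mod_cast himT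
        have hEcard : (E.card : ℝ) = ((E.filter fun f => f.2 = e.2).card : ℝ) + (F.card : ℝ) := by
          exact_mod_cast hsplit.symm
        nlinarith [hcard]
      · -- first coordinate bad
        set F : Finset (α × β) := E.filter (fun f => ¬ f.1 = e.1) with hF
        have hFE : F ⊆ E := Finset.filter_subset _ _
        have heF : e ∉ F := by simp [hF]
        have hFlt : F.card < E.card :=
          Finset.card_lt_card (Finset.ssubset_iff_of_subset hFE |>.mpr ⟨e, heE, heF⟩)
        obtain ⟨E', hE'F, hcard, hgood'⟩ := ih F (by omega)
        refine ⟨E', hE'F.trans hFE, ?_, hgood'⟩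
        have hsplit : (E.filter fun f => f.1 = e.1).card + F.card = E.card :=
          Finset.card_filter_add_card_filter_not _
        have himT : (F.image Prod.snd).card ≤ (E.image Prod.snd).card :=
          Finset.card_le_card (Finset.image_subset_image hFE)
        have himS : (F.image Prod.fst).card + 1 ≤ (E.image Prod.fst).card := by
          have hsub : F.image Prod.fst ⊆ (E.image Prod.fst).erase e.1 := by
            intro x hx
            obtain ⟨f, hf, rfl⟩ := Finset.mem_image.mp hx
            have := (Finset.mem_filter.mp hf).2
            exact Finset.mem_erase.mpr ⟨this, Finset.mem_image_of_mem _ (hFE hf)⟩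
          have hmem : e.1 ∈ E.image Prod.fst := Finset.mem_image_of_mem _ heE
          have hx1 := Finset.card_le_card hsub
          have hx2 := Finset.card_erase_of_mem hmem
          have hx3 := Finset.card_pos.mpr ⟨_, hmem⟩
          omega
        have hc1 : tS * (((F.image Prod.fst).card : ℝ) + 1) ≤ tS * ((E.image Prod.fst).card : ℝ) := by
          apply mul_le_mul_of_nonneg_left _ hS; exact_mod_cast himS
        have hc2 : tT * ((F.image Prod.snd).card : ℝ) ≤ tT * ((E.image Prod.snd).card : ℝ) := by
          apply mul_le_mul_of_nonneg_left _ hT; exact_mod_cast himT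
        have hEcard : (E.card : ℝ) = ((E.filter fun f => f.1 = e.1).card : ℝ) + (F.card : ℝ) := by
          exact_mod_cast hsplit.symm
        nlinarith [hcard]

/-- **Lemma 3.5.** Let `a, b ≥ 1` with `a + b = k − 1` (`k ≥ 3`), let `C ∪ D = [m]`
be a partition, and let `G` be a bipartite graph (a set `E` of edges `(S,T)` with
`S` an `a`-subset of `C` and `T` a `b`-subset of `D`) with at least `2k·m^{k−2}`
edges. Then there is a subgraph `E' ⊆ E` with at least half as many edges such that
every edge `(S,T) ∈ E'` has `deg_{E'}(S) ≥ (b + 1/2)·m^{b−1}` and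
`deg_{E'}(T) ≥ (a + 1/2)·m^{a−1}`. -/
theorem stmt_13 (k m a b : ℕ) (hk : 3 ≤ k) (hm : 1 ≤ m)
    (ha : 1 ≤ a) (hb : 1 ≤ b) (hab : a + b = k - 1)
    (C D : Finset (Fin m)) (hCD : Disjoint C D) (hU : C ∪ D = Finset.univ)
    (E : Finset (Finset (Fin m) × Finset (Fin m)))
    (hE : ∀ e ∈ E, e.1 ⊆ C ∧ e.1.card = a ∧ e.2 ⊆ D ∧ e.2.card = b)
    (hbig : 2 * k * m ^ (k - 2) ≤ E.card) :
    ∃ E' ⊆ E, E.card ≤ 2 * E'.card ∧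
      ∀ e ∈ E',
        ((b : ℝ) + 1 / 2) * (m : ℝ) ^ (b - 1) ≤
          ((E'.filter fun f => f.1 = e.1).card : ℝ) ∧
        ((a : ℝ) + 1 / 2) * (m : ℝ) ^ (a - 1) ≤
          ((E'.filter fun f => f.2 = e.2).card : ℝ) := by
  have hk' : k = a + b + 1 := by omega
  set tS : ℝ := ((b : ℝ) + 1 / 2) * (m : ℝ) ^ (b - 1) with htS
  set tT : ℝ := ((a : ℝ) + 1 / 2) * (m : ℝ) ^ (a - 1) with htT
  have hS : 0 ≤ tS := by positivity
  have hT : 0 ≤ tT := by positivity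
  obtain ⟨E', hsub, hcard, hgood⟩ := aux_del tS tT hS hT E.card E le_rfl
  refine ⟨E', hsub, ?_, hgood⟩
  -- bound the images
  have himS : (E.image Prod.fst).card ≤ m ^ a := by
    calc (E.image Prod.fst).card ≤ (C.powersetCard a).card := by
          apply Finset.card_le_card
          intro S hS'
          obtain ⟨f, hf, rfl⟩ := Finset.mem_image.mp hS'
          exact Finset.mem_powersetCard.mpr ⟨(hE f hf).1, (hE f hf).2.1⟩
      _ = C.card.choose a := Finset.card_powersetCard _ _
      _ ≤ m.choose a := Nat.choose_le_choose _ (by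
          simpa using (Finset.card_le_card (Finset.subset_univ C)).trans_eq (by simp))
      _ ≤ m ^ a := Nat.choose_le_pow _ _
  have himT : (E.image Prod.snd).card ≤ m ^ b := by
    calc (E.image Prod.snd).card ≤ (D.powersetCard b).card := by
          apply Finset.card_le_card
          intro S hS'
          obtain ⟨f, hf, rfl⟩ := Finset.mem_image.mp hS'
          exact Finset.mem_powersetCard.mpr ⟨(hE f hf).2.2.1, (hE f hf).2.2.2⟩
      _ = D.card.choose b := Finset.card_powersetCard _ _
      _ ≤ m.choose b := Nat.choose_le_choose _ (by
          simpa using (Finset.card_le_card (Finset.subset_univ D)).trans_eq (by simp))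
      _ ≤ m ^ b := Nat.choose_le_pow _ _
  have hmpos : (0 : ℝ) < (m : ℝ) := by exact_mod_cast hm
  have hpow1 : (m : ℝ) ^ (b - 1) * (m : ℝ) ^ a = (m : ℝ) ^ (k - 2) := by
    rw [← pow_add]; congr 1; omega
  have hpow2 : (m : ℝ) ^ (a - 1) * (m : ℝ) ^ b = (m : ℝ) ^ (k - 2) := by
    rw [← pow_add]; congr 1; omega
  have hbS : tS * ((E.image Prod.fst).card : ℝ) ≤ ((b : ℝ) + 1 / 2) * (m : ℝ) ^ (k - 2) := by
    have h1 : ((E.image Prod.fst).card : ℝ) ≤ (m : ℝ) ^ a := by exact_mod_cast himS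
    calc tS * ((E.image Prod.fst).card : ℝ) ≤ tS * ((m : ℝ) ^ a) := by gcongr
      _ = ((b : ℝ) + 1 / 2) * (m : ℝ) ^ (k - 2) := by rw [htS, mul_assoc, hpow1]
  have hbT : tT * ((E.image Prod.snd).card : ℝ) ≤ ((a : ℝ) + 1 / 2) * (m : ℝ) ^ (k - 2) := by
    have h1 : ((E.image Prod.snd).card : ℝ) ≤ (m : ℝ) ^ b := by exact_mod_cast himT
    calc tT * ((E.image Prod.snd).card : ℝ) ≤ tT * ((m : ℝ) ^ b) := by gcongr
      _ = ((a : ℝ) + 1 / 2) * (m : ℝ) ^ (k - 2) := by rw [htT, mul_assoc, hpow2]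
  have hsum : ((b : ℝ) + 1 / 2) + ((a : ℝ) + 1 / 2) = (k : ℝ) := by
    have : (k : ℝ) = (a : ℝ) + (b : ℝ) + 1 := by exact_mod_cast hk'
    linarith
  have hbigR : 2 * (k : ℝ) * (m : ℝ) ^ (k - 2) ≤ (E.card : ℝ) := by exact_mod_cast hbig
  have key : (E.card : ℝ) ≤ 2 * (E'.card : ℝ) := by nlinarith
  exact_mod_cast key
end

section
/- Let k ≥ 1 and t ≥ 2 be integers and let m be a positive multiple of k. Then the k-fold product I_{m/k} × I_{m/k} × ⋯ × I_{m/k} is an m-rowed simple (0,1)-matrix with (m/k)^k columns that does not contain t·F_{0,k,k,0} as a configuration; consequently forb(m, t·F_{0,k,k,0}) ≥ (m/k)^k. -/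
/-- Simplicity for a matrix whose columns are indexed by an arbitrary type. -/
def SimpleG {m : ℕ} {α : Type*} (A : Matrix (Fin m) α Bool) : Prop :=
  Function.Injective fun j i => A i j

/-- Configuration containment in a matrix whose columns are indexed by an
arbitrary type. -/
def IsConfigG {k n m : ℕ} {α : Type*} (F : Matrix (Fin k) (Fin n) Bool)
    (A : Matrix (Fin m) α Bool) : Prop :=
  ∃ (r : Fin k → Fin m) (c : Fin n → α),
    Function.Injective r ∧ Function.Injective c ∧ ∀ i j, A (r i) (c j) = F i j

/-- The `k`-fold product `I_{m/k} × I_{m/k} × ⋯ × I_{m/k}`: the rows `[m]` are split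
into `k` consecutive blocks of size `m/k`; a column is indexed by a choice of one
position in each block, and has a 1 exactly in the chosen position of each block. -/
def kFoldIdentity (k m : ℕ) : Matrix (Fin m) (Fin k → Fin (m / k)) Bool :=
  fun i c => decide (∃ b : Fin k, i.val = b.val * (m / k) + (c b).val)


lemma decomp_unique {d b b' x x' : ℕ} (hx : x < d) (hx' : x' < d)
    (h : b * d + x = b' * d + x') : b = b' ∧ x = x' := by
  have key : b = b' := by
    rcases Nat.lt_trichotomy b b' with h1 | h1 | h1
    · have h2 : (b + 1) * d ≤ b' * d := Nat.mul_le_mul_right d h1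
      have h3 : (b + 1) * d = b * d + d := by ring
      omega
    · exact h1
    · have h2 : (b' + 1) * d ≤ b * d := Nat.mul_le_mul_right d h1
      have h3 : (b' + 1) * d = b' * d + d := by ring
      omega
  exact ⟨key, by subst key; omega⟩

lemma row_lt {k m : ℕ} (hdvd : k ∣ m) (b : Fin k) (x : Fin (m / k)) :
    b.val * (m / k) + x.val < m := by
  have hm : k * (m / k) = m := Nat.mul_div_cancel' hdvd
  have h2 : (b.val + 1) * (m / k) ≤ k * (m / k) := Nat.mul_le_mul_right _ b.isLt
  have h3 : (b.val + 1) * (m / k) = b.val * (m / k) + (m / k) := by ring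
  omega

lemma kfold_simple (k m : ℕ) (hdvd : k ∣ m) : SimpleG (kFoldIdentity k m) := by
  intro c c' h
  funext b
  have hi := row_lt hdvd b (c b)
  have h1 : kFoldIdentity k m ⟨_, hi⟩ c = true := by
    simp only [kFoldIdentity, decide_eq_true_eq]
    exact ⟨b, rfl⟩
  have h2 : kFoldIdentity k m ⟨_, hi⟩ c' = true := by
    have h3 := congrFun h ⟨_, hi⟩
    simp only at h3
    rw [← h3]
    exact h1
  simp only [kFoldIdentity, decide_eq_true_eq] at h2
  obtain ⟨b', hb'⟩ := h2
  obtain ⟨hbb, hxx⟩ := decomp_unique (c b).isLt (c' b').isLt hb'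
  have hb : b = b' := Fin.ext hbb
  subst hb
  exact Fin.ext hxx

set_option maxHeartbeats 1000000 in
lemma kfold_not_config (k t m : ℕ) (hk : 1 ≤ k) (ht : 2 ≤ t) (hdvd : k ∣ m) :
    ¬ IsConfigG (tCopies t (Fabcd 0 k k 0)) (kFoldIdentity k m) := by
  rintro ⟨r, c, hr, hc, hA⟩
  have ht4 : 2 < t * 2 := by omega
  set j0 : Fin (t * 2) := ⟨0, by omega⟩ with hj0
  set j2 : Fin (t * 2) := ⟨2, by omega⟩ with hj2
  -- the F-values on the first k rows at columns j0, j2 are `true`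
  have hF : ∀ (a : Fin k) (j : Fin (t * 2)), j.val % 2 = 0 →
      tCopies t (Fabcd 0 k k 0) ⟨a.val, by omega⟩ j = true := by
    intro a j hj
    simp only [tCopies, Fabcd, hj]
    have h1 : ¬ (a.val < 0) := by omega
    have h2 : a.val < 0 + k := by omega
    simp [h1, h2, Fin.ext_iff, hj]
  have key : ∀ a : Fin k, ∃ b : Fin k,
      (r ⟨a.val, by omega⟩).val = b.val * (m / k) + (c j0 b).val ∧
      (r ⟨a.val, by omega⟩).val = b.val * (m / k) + (c j2 b).val := by
    intro a
    have h0 : kFoldIdentity k m (r ⟨a.val, by omega⟩) (c j0) = true := by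
      rw [hA]; exact hF a j0 (by rw [hj0]; norm_num)
    have h2 : kFoldIdentity k m (r ⟨a.val, by omega⟩) (c j2) = true := by
      rw [hA]; exact hF a j2 (by rw [hj2]; norm_num)
    simp only [kFoldIdentity, decide_eq_true_eq] at h0 h2
    obtain ⟨b, hb⟩ := h0
    obtain ⟨b', hb'⟩ := h2
    have heq : b.val * (m / k) + (c j0 b).val = b'.val * (m / k) + (c j2 b').val :=
      hb.symm.trans hb'
    obtain ⟨hbb, hxx⟩ := decomp_unique (c j0 b).isLt (c j2 b').isLt heq
    have hbe : b = b' := Fin.ext hbb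
    subst hbe
    exact ⟨b, hb, hb'⟩
  choose φ hφ0 hφ2 using key
  have hφinj : Function.Injective φ := by
    intro a a' hEq
    have h1 : (r ⟨a.val, by omega⟩).val = (r ⟨a'.val, by omega⟩).val := by
      rw [hφ0 a, hφ0 a', hEq]
    have h2 := hr (Fin.ext h1 : r ⟨a.val, by omega⟩ = r ⟨a'.val, by omega⟩)
    exact Fin.ext (by simpa [Fin.ext_iff] using h2)
  have hφsurj : Function.Surjective φ := Finite.surjective_of_injective hφinj
  have hcc : c j0 = c j2 := by
    funext b
    obtain ⟨a, ha⟩ := hφsurj b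
    have h1 := hφ0 a
    have h2 := hφ2 a
    rw [ha] at h1 h2
    exact Fin.ext (by omega)
  have := hc hcc
  simp [hj0, hj2, Fin.ext_iff] at this

/-- For `m` a positive multiple of `k`, the `k`-fold product of identity matrices
is an `m`-rowed simple matrix with `(m/k)^k` columns avoiding `t·F_{0,k,k,0}`;
consequently `forb(m, t·F_{0,k,k,0}) ≥ (m/k)^k`. -/
theorem stmt_14 (k t m : ℕ) (hk : 1 ≤ k) (ht : 2 ≤ t) (hm : 0 < m) (hdvd : k ∣ m) :
    SimpleG (kFoldIdentity k m) ∧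
    Fintype.card (Fin k → Fin (m / k)) = (m / k) ^ k ∧
    ¬ IsConfigG (tCopies t (Fabcd 0 k k 0)) (kFoldIdentity k m) ∧
    (m / k) ^ k ≤ forb m (tCopies t (Fabcd 0 k k 0)) := by
  have hcard : Fintype.card (Fin k → Fin (m / k)) = (m / k) ^ k := by
    simp [Fintype.card_fun]
  refine ⟨kfold_simple k m hdvd, hcard, kfold_not_config k t m hk ht hdvd, ?_⟩
  set e : Fin ((m / k) ^ k) ≃ (Fin k → Fin (m / k)) :=
    (Fintype.equivFinOfCardEq hcard).symm with he
  set A' : Matrix (Fin m) (Fin ((m / k) ^ k)) Bool :=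
    fun i j => kFoldIdentity k m i (e j) with hA'
  have hsimple : Simple A' := by
    intro j j' h
    exact e.injective (kfold_simple k m hdvd h)
  have hnc : ¬ IsConfig (tCopies t (Fabcd 0 k k 0)) A' := by
    rintro ⟨r, c, hr, hc, hA⟩
    exact kfold_not_config k t m hk ht hdvd
      ⟨r, fun j => e (c j), hr, e.injective.comp hc, hA⟩
  have hmem : (m / k) ^ k ∈
      { p : ℕ | ∃ A : Matrix (Fin m) (Fin p) Bool, Simple A ∧ ¬ IsConfig (tCopies t (Fabcd 0 k k 0)) A } :=
    ⟨A', hsimple, hnc⟩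
  have hbdd : BddAbove
      { p : ℕ | ∃ A : Matrix (Fin m) (Fin p) Bool, Simple A ∧ ¬ IsConfig (tCopies t (Fabcd 0 k k 0)) A } := by
    refine ⟨2 ^ m, fun p hp => ?_⟩
    obtain ⟨A, hA, -⟩ := hp
    have := Fintype.card_le_of_injective _ hA
    simpa using this
  exact le_csSup hbdd hmem
end

section
/- Let X be an m-rowed simple (0,1)-matrix with at least 3 columns, all of column sum i, such that F_{0,2,2,0} ⊀ X. Then exactly one of the following holds: (type 1) there is a set B ⊆ [m] with |B| = i−1 such that the support of each column of X equals B ∪ {r} for some row r ∉ B, with distinct columns using distinct rows r; or (type 2) there is a set S ⊆ [m] with |S| = i+1 such that the support of each column of X equals S \ {r} for some r ∈ S, with distinct columns using distinct rows r. -/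
/-- Type 1 (sunflower) structure: there is a set `B` of `i−1` rows such that the
support of each column is `B ∪ {r}` for some row `r ∉ B`, distinct columns using
distinct rows `r`. -/
def SunflowerType1 {m p : ℕ} (i : ℕ) (X : Matrix (Fin m) (Fin p) Bool) : Prop :=
  ∃ B : Finset (Fin m), B.card = i - 1 ∧
    ∃ f : Fin p → Fin m, Function.Injective f ∧
      ∀ j : Fin p, f j ∉ B ∧
        (Finset.univ.filter fun r : Fin m => X r j = true) = insert (f j) B

/-- Type 2 (inverse sunflower) structure: there is a set `S` of `i+1` rows such that
the support of each column is `S \ {r}` for some row `r ∈ S`, distinct columns using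
distinct rows `r`. -/
def SunflowerType2 {m p : ℕ} (i : ℕ) (X : Matrix (Fin m) (Fin p) Bool) : Prop :=
  ∃ S : Finset (Fin m), S.card = i + 1 ∧
    ∃ f : Fin p → Fin m, Function.Injective f ∧
      ∀ j : Fin p, f j ∈ S ∧
        (Finset.univ.filter fun r : Fin m => X r j = true) = S.erase (f j)

lemma vec2_injective {α : Type*} {a b : α} (hab : a ≠ b) :
    Function.Injective ![a, b] := by
  intro x y hxy
  fin_cases x <;> fin_cases y <;> simp_all

lemma vec4_injective {α : Type*} {r1 r2 r3 r4 : α} (h12 : r1 ≠ r2) (h13 : r1 ≠ r3)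
    (h14 : r1 ≠ r4) (h23 : r2 ≠ r3) (h24 : r2 ≠ r4) (h34 : r3 ≠ r4) :
    Function.Injective ![r1, r2, r3, r4] := by
  intro x y hxy
  fin_cases x <;> fin_cases y <;> simp_all

lemma notBoth_aux {m p i : ℕ} (hp : 3 ≤ p) (X : Matrix (Fin m) (Fin p) Bool)
    (h1 : SunflowerType1 i X) (h2 : SunflowerType2 i X) : False := by
  classical
  obtain ⟨B, hB, f, hf, hfj⟩ := h1
  obtain ⟨S, hS, g, hg, hgj⟩ := h2
  have key : ∀ j : Fin p, insert (f j) B = S.erase (g j) := fun j =>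
    ((hfj j).2.symm.trans (hgj j).2)
  have hBS : B ⊆ S := by
    intro b hb
    have : b ∈ S.erase (g ⟨0, by omega⟩) := by
      rw [← key]; exact Finset.mem_insert_of_mem hb
    exact Finset.mem_of_mem_erase this
  have hfS : ∀ j, f j ∈ S := by
    intro j
    have : f j ∈ S.erase (g j) := by rw [← key]; exact Finset.mem_insert_self _ _
    exact Finset.mem_of_mem_erase this
  have hsub : B ∪ Finset.image f Finset.univ ⊆ S := by
    intro x hx
    rcases Finset.mem_union.mp hx with h | h
    · exact hBS h
    · obtain ⟨j, _, rfl⟩ := Finset.mem_image.mp h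
      exact hfS j
  have hdisj : Disjoint B (Finset.image f Finset.univ) := by
    rw [Finset.disjoint_right]
    intro x hx
    obtain ⟨j, _, rfl⟩ := Finset.mem_image.mp hx
    exact (hfj j).1
  have hcard : B.card + p ≤ S.card := by
    have h := Finset.card_le_card hsub
    rwa [Finset.card_union_of_disjoint hdisj, Finset.card_image_of_injective _ hf,
      Finset.card_univ, Fintype.card_fin] at h
  omega

/-- The structure of the columns of fixed sum `i` in a simple matrix avoiding
`F_{0,2,2,0}`: with at least 3 columns, exactly one of type 1 / type 2 holds. -/
theorem stmt_15 (m p i : ℕ) (hp : 3 ≤ p)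
    (X : Matrix (Fin m) (Fin p) Bool) (hX : Simple X)
    (hsum : ∀ j : Fin p, (Finset.univ.filter fun r : Fin m => X r j = true).card = i)
    (havoid : ¬ IsConfig (Fabcd 0 2 2 0) X) :
    (SunflowerType1 i X ∧ ¬ SunflowerType2 i X) ∨
    (SunflowerType2 i X ∧ ¬ SunflowerType1 i X) := by
  classical
  set A : Fin p → Finset (Fin m) := (fun j => Finset.univ.filter fun r : Fin m => X r j = true)
    with hA
  have hAj : ∀ j : Fin p, (Finset.univ.filter fun r : Fin m => X r j = true) = A j :=
    fun _ => rfl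
  have hAcard : ∀ j : Fin p, (A j).card = i := hsum
  have hmem : ∀ (r : Fin m) (j : Fin p), r ∈ A j ↔ X r j = true := by
    intro r j; simp [hA]
  -- supports determine columns
  have hinj : ∀ j j' : Fin p, A j = A j' → j = j' := by
    intro j j' h
    apply hX
    funext r
    have h1 : (r ∈ A j) ↔ (r ∈ A j') := by rw [h]
    rw [hmem, hmem] at h1
    exact Bool.eq_iff_iff.mpr h1
  -- key: any two distinct columns differ in exactly one element each way
  have hsd : ∀ j j' : Fin p, j ≠ j' → (A j \ A j').card = 1 := by
    intro j j' hjj'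
    have hcap : ∀ a b : Fin p, (A a ∩ A b).card + (A a \ A b).card = i := by
      intro a b
      rw [Finset.card_inter_add_card_sdiff]
      exact hAcard a
    have hsymm : (A j' \ A j).card = (A j \ A j').card := by
      have h1 := hcap j j'
      have h2 := hcap j' j
      rw [Finset.inter_comm] at h2
      omega
    have hne : A j ≠ A j' := fun h => hjj' (hinj _ _ h)
    have h0 : (A j \ A j').card ≠ 0 := by
      intro h
      apply hne
      have hsub : A j ⊆ A j' := by
        rw [← Finset.sdiff_eq_empty_iff_subset]
        exact Finset.card_eq_zero.mp h
      exact Finset.eq_of_subset_of_card_le hsub (by rw [hAcard, hAcard])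
    have hlt : (A j \ A j').card < 2 := by
      by_contra hge
      push_neg at hge
      obtain ⟨r1, hr1, r2, hr2, h12⟩ := Finset.one_lt_card.mp (by omega : 1 < (A j \ A j').card)
      obtain ⟨r3, hr3, r4, hr4, h34⟩ := Finset.one_lt_card.mp (by omega : 1 < (A j' \ A j).card)
      rw [Finset.mem_sdiff, hmem, hmem] at hr1 hr2 hr3 hr4
      have e1 : X r1 j = true := hr1.1
      have e1' : X r1 j' = false := by simpa using hr1.2
      have e2 : X r2 j = true := hr2.1
      have e2' : X r2 j' = false := by simpa using hr2.2
      have e3 : X r3 j' = true := hr3.1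
      have e3' : X r3 j = false := by simpa using hr3.2
      have e4 : X r4 j' = true := hr4.1
      have e4' : X r4 j = false := by simpa using hr4.2
      have n13 : r1 ≠ r3 := by intro h; rw [h, e3'] at e1; exact absurd e1 (by simp)
      have n14 : r1 ≠ r4 := by intro h; rw [h, e4'] at e1; exact absurd e1 (by simp)
      have n23 : r2 ≠ r3 := by intro h; rw [h, e3'] at e2; exact absurd e2 (by simp)
      have n24 : r2 ≠ r4 := by intro h; rw [h, e4'] at e2; exact absurd e2 (by simp)
      apply havoid
      refine ⟨![r1, r2, r3, r4], ![j, j'],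
        vec4_injective h12 n13 n14 n23 n24 h34, vec2_injective hjj', ?_⟩
      intro a b
      fin_cases a <;> fin_cases b <;>
        simp [Fabcd, e1, e1', e2, e2', e3, e3', e4, e4']
    omega
  -- two distinguished columns
  have hi0 : (0 : ℕ) < p := by omega
  have hi1 : (1 : ℕ) < p := by omega
  set j0 : Fin p := ⟨0, hi0⟩ with hj0
  set j1 : Fin p := ⟨1, hi1⟩ with hj1
  have hj01 : j0 ≠ j1 := by simp [hj0, hj1, Fin.ext_iff]
  have hCcard : (A j0 ∩ A j1).card + 1 = i := by
    have h := Finset.card_inter_add_card_sdiff (A j0) (A j1)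
    rw [hAcard, hsd j0 j1 hj01] at h
    omega
  have hCsub0 : A j0 ∩ A j1 ⊆ A j0 := Finset.inter_subset_left
  have hCsub1 : A j0 ∩ A j1 ⊆ A j1 := Finset.inter_subset_right
  by_cases hcase : ∀ j : Fin p, A j0 ∩ A j1 ⊆ A j
  · -- Type 1
    left
    have hone : ∀ j : Fin p, (A j \ (A j0 ∩ A j1)).card = 1 := by
      intro j
      have h1 := Finset.card_sdiff_of_subset (hcase j)
      rw [hAcard] at h1
      omega
    choose f hfspec using fun j => Finset.card_eq_one.mp (hone j)
    have hfj : ∀ j, f j ∈ A j \ (A j0 ∩ A j1) := by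
      intro j; rw [hfspec j]; exact Finset.mem_singleton_self _
    have hAeq : ∀ j, A j = insert (f j) (A j0 ∩ A j1) := by
      intro j
      rw [Finset.insert_eq, ← hfspec j]
      exact (Finset.sdiff_union_of_subset (hcase j)).symm
    have h1 : SunflowerType1 i X := by
      refine ⟨A j0 ∩ A j1, by omega, f, ?_, ?_⟩
      · intro a b hab
        apply hinj
        rw [hAeq a, hAeq b, hab]
      · intro j
        refine ⟨(Finset.mem_sdiff.mp (hfj j)).2, ?_⟩
        rw [hAj, hAeq j]
    exact ⟨h1, fun h2 => notBoth_aux hp X h1 h2⟩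
  · -- Type 2
    right
    push_neg at hcase
    obtain ⟨k, hk⟩ := hcase
    obtain ⟨c, hcC, hck⟩ := Finset.not_subset.mp hk
    have hScard : (A j0 ∪ A j1).card = i + 1 := by
      have h1 := Finset.card_union_add_card_inter (A j0) (A j1)
      rw [hAcard, hAcard] at h1
      omega
    -- pair trick: if two elements lie in A a \ A b we contradict hsd
    have pair : ∀ (a b : Fin p) (z w : Fin m), z ≠ w → z ∈ A a → z ∉ A b →
        w ∈ A a → w ∉ A b → False := by
      intro a b z w hzw hz hz' hw hw'
      have hab : a ≠ b := by intro h; rw [h] at hz; exact hz' hz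
      have hsub : ({z, w} : Finset (Fin m)) ⊆ A a \ A b := by
        intro x hx
        rcases Finset.mem_insert.mp hx with rfl | hx
        · exact Finset.mem_sdiff.mpr ⟨hz, hz'⟩
        · rw [Finset.mem_singleton.mp hx]
          exact Finset.mem_sdiff.mpr ⟨hw, hw'⟩
      have h := Finset.card_le_card hsub
      rw [hsd a b hab, Finset.card_insert_of_notMem (by simp [hzw]),
        Finset.card_singleton] at h
      omega
    -- columns missing an element of C are exactly S minus that element
    have hmiss : ∀ (j : Fin p) (c' : Fin m), c' ∈ A j0 ∩ A j1 → c' ∉ A j →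
        A j = (A j0 ∪ A j1).erase c' := by
      intro j c' hc'C hc'j
      have hc'S : c' ∈ A j0 ∪ A j1 := Finset.mem_union_left _ (hCsub0 hc'C)
      have hsub : (A j0 ∪ A j1).erase c' ⊆ A j := by
        intro z hz
        obtain ⟨hzc, hzS⟩ := Finset.mem_erase.mp hz
        by_contra hzj
        rcases Finset.mem_union.mp hzS with hz0 | hz1
        · exact pair j0 j z c' hzc hz0 hzj (hCsub0 hc'C) hc'j
        · exact pair j1 j z c' hzc hz1 hzj (hCsub1 hc'C) hc'j
      have hcard : (A j).card ≤ ((A j0 ∪ A j1).erase c').card := by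
        rw [Finset.card_erase_of_mem hc'S, hScard, hAcard]
        omega
      exact (Finset.eq_of_subset_of_card_le hsub hcard).symm
    have hAk : A k = (A j0 ∪ A j1).erase c := hmiss k c hcC hck
    -- every column is contained in S
    have hsubS : ∀ j : Fin p, A j ⊆ A j0 ∪ A j1 := by
      intro j
      by_cases hCj : A j0 ∩ A j1 ⊆ A j
      · intro z hz
        by_contra hzS
        have hzk : z ∉ A k := fun h => hzS (Finset.mem_of_mem_erase (hAk ▸ h))
        have hcj' : c ∈ A j := hCj hcC
        have hzc : z ≠ c := by
          intro h; rw [h] at hzS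
          exact hzS (Finset.mem_union_left _ (hCsub0 hcC))
        exact pair j k z c hzc hz hzk hcj' hck
      · obtain ⟨c', hc'C, hc'j⟩ := Finset.not_subset.mp hCj
        rw [hmiss j c' hc'C hc'j]
        exact Finset.erase_subset _ _
    -- extract the missing element of each column
    have hone : ∀ j : Fin p, ((A j0 ∪ A j1) \ A j).card = 1 := by
      intro j
      have h1 := Finset.card_sdiff_of_subset (hsubS j)
      rw [hScard, hAcard] at h1
      omega
    choose g hgspec using fun j => Finset.card_eq_one.mp (hone j)
    have hgj : ∀ j, g j ∈ (A j0 ∪ A j1) \ A j := by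
      intro j; rw [hgspec j]; exact Finset.mem_singleton_self _
    have hAeq : ∀ j, A j = (A j0 ∪ A j1).erase (g j) := by
      intro j
      ext x
      simp only [Finset.mem_erase]
      constructor
      · intro hx
        exact ⟨fun h => (Finset.mem_sdiff.mp (hgj j)).2 (h ▸ hx), hsubS j hx⟩
      · rintro ⟨hxg, hxS⟩
        by_contra hxj
        have hx : x ∈ (A j0 ∪ A j1) \ A j := Finset.mem_sdiff.mpr ⟨hxS, hxj⟩
        rw [hgspec j] at hx
        exact hxg (Finset.mem_singleton.mp hx)
    have h2 : SunflowerType2 i X := by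
      refine ⟨A j0 ∪ A j1, hScard, g, ?_, ?_⟩
      · intro a b hab
        apply hinj
        rw [hAeq a, hAeq b, hab]
      · intro j
        exact ⟨(Finset.mem_sdiff.mp (hgj j)).1, by rw [hAj, hAeq j]⟩
    exact ⟨h2, fun h1 => notBoth_aux hp X h1 h2⟩
end
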